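/- arXiv:2605.26482 — 8 statements merged into one kernel-verified Lean document; each statement's English description precedes it below -/
import Mathlib

section
/- Let r > 1 be real, K a number field, and χ a real Dirichlet character. Let P be a finite set of nonzero prime ideals of 𝓞_K and let 𝔭 be a nonzero prime ideal not in P. Write 𝒩_Q = {I ∈ I_K : no prime in Q divides I} for a set Q of primes, and set σ_{r,K,χ}(𝔭^∞) = (1 − χ(N(𝔭))·N(𝔭)^{-r})^{-1}. Then the closure of σ_{r,K,χ}(𝒩_P) equals the union over a ∈ ℤ_{≥0} ∪ {∞} of σ_{r,K,χ}(𝔭^a) · (closure of σ_{r,K,χ}(𝒩_{P ∪ {𝔭}})). -/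
open NumberField
open scoped Pointwise

/-- The twisted ideal divisor function `σ_{r,K,χ}(I) = ∑_{J ∣ I} χ(N(J)) N(J)^{-r}`. -/
noncomputable def sigmaChi (K : Type*) [Field K] [NumberField K] {m : ℕ}
    (χ : DirichletCharacter ℝ m) (r : ℝ) (I : Ideal (𝓞 K)) : ℝ :=
  ∑' J : {J : Ideal (𝓞 K) // J ∣ I},
    χ ((Ideal.absNorm (J : Ideal (𝓞 K)) : ℕ) : ZMod m) *
      (Ideal.absNorm (J : Ideal (𝓞 K)) : ℝ) ^ (-r)

/-- `σ_{r,K,χ}(𝔭^∞) = (1 − χ(N(𝔭)) N(𝔭)^{-r})⁻¹`. -/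
noncomputable def sigmaChiInf (K : Type*) [Field K] [NumberField K] {m : ℕ}
    (χ : DirichletCharacter ℝ m) (r : ℝ) (p : Ideal (𝓞 K)) : ℝ :=
  (1 - χ ((Ideal.absNorm p : ℕ) : ZMod m) * (Ideal.absNorm p : ℝ) ^ (-r))⁻¹

/-!
If `𝔭 ∤ J`, every divisor of `𝔭^a J` is uniquely `𝔭^t e` with `t ≤ a` and `e ∣ J`, so
`σ(𝔭^a J) = σ(𝔭^a) σ(J)`; hence `σ(𝒩_P) = ⋃_a σ(𝔭^a) · S` with `S = σ(𝒩_{P ∪ {𝔭}})`.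
The factors `σ(𝔭^a)` are partial sums of a geometric series with ratio `χ(N𝔭) N𝔭^{-r}` of
absolute value `< 1`: they are nonzero and tend to `σ(𝔭^∞) ≠ 0`. Hence `C = {σ(𝔭^a)} ∪ {σ(𝔭^∞)}`
is a compact set of nonzero scalars, so `C · closure S` is closed. It contains every
`σ(𝔭^a) · S`, and its `a = ∞` part consists of limits of the parts with `a < ∞`, so it is the
closure of their union.
-/

open Filter Topology Set

section Topology

variable {G₀ X : Type*} [GroupWithZero G₀] [TopologicalSpace G₀] [ContinuousInv₀ G₀]
  [ContinuousMul G₀] [TopologicalSpace X] [MulAction G₀ X] [ContinuousSMul G₀ X]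

theorem IsClosed.smul_left_of_isCompact₀ {C : Set G₀} {F : Set X} (hF : IsClosed F)
    (hC : IsCompact C) (hC0 : (0 : G₀) ∉ C) : IsClosed (C • F) := by
  have hCU : C = Units.val '' (Units.val ⁻¹' C : Set G₀ˣ) := by
    refine (image_preimage_eq_of_subset fun c hc => ?_).symm
    exact ⟨Units.mk0 c (ne_of_mem_of_not_mem hc hC0), rfl⟩
  have hU : IsCompact (Units.val ⁻¹' C : Set G₀ˣ) := by
    rw [Units.isEmbedding_val₀.isCompact_iff, ← hCU]; exact hC
  have : C • F = (Units.val ⁻¹' C : Set G₀ˣ) • F := by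
    conv_lhs => rw [hCU]
    ext x; simp [Set.mem_smul, Units.smul_def]
  rw [this]
  exact hF.smul_left_of_isCompact hU

theorem closure_iUnion_smul_of_tendsto {s : ℕ → G₀} {L : G₀} (hs : Tendsto s atTop (𝓝 L))
    (hs0 : ∀ n, s n ≠ 0) (hL : L ≠ 0) (T : Set X) :
    closure (⋃ n, s n • T) = (⋃ n, s n • closure T) ∪ L • closure T := by
  have hC : insert L (range s) • closure T = (⋃ n, s n • closure T) ∪ L • closure T := by
    rw [← iUnion_smul_set, biUnion_insert, biUnion_range, union_comm]
  apply subset_antisymm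
  · rw [← hC]
    refine closure_minimal (iUnion_subset fun n => ?_) ?_
    · exact (smul_set_mono subset_closure).trans
        (smul_set_subset_smul (mem_insert_of_mem _ (mem_range_self n)))
    · refine isClosed_closure.smul_left_of_isCompact₀ hs.isCompact_insert_range ?_
      rintro (h | ⟨n, hn⟩)
      exacts [hL h.symm, hs0 n hn]
  · have hsub : ∀ n, s n • closure T ⊆ closure (⋃ n, s n • T) := fun n =>
      (smul_closure_subset _ _).trans (closure_mono (subset_iUnion (fun n => s n • T) n))
    refine union_subset (iUnion_subset hsub) ?_
    rintro _ ⟨x, hx, rfl⟩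
    exact isClosed_closure.mem_of_tendsto (hs.smul_const x)
      (Eventually.of_forall fun n => hsub n (smul_mem_smul_set hx))

end Topology

section Divisors

variable {M : Type*} [CommMonoidWithZero M]

theorem bijective_mul_dvd_of_isRelPrime [IsCancelMulZero M] [Subsingleton Mˣ]
    [DecompositionMonoid M] {a b : M} (hab : IsRelPrime a b) :
    Function.Bijective fun d : {d // d ∣ a} × {d // d ∣ b} =>
      (⟨d.1 * d.2, mul_dvd_mul d.1.2 d.2.2⟩ : {d // d ∣ a * b}) := by
  refine ⟨fun ⟨⟨d, hd⟩, ⟨e, he⟩⟩ ⟨⟨d', hd'⟩, ⟨e', he'⟩⟩ h => ?_, fun ⟨c, hc⟩ => ?_⟩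
  · have h : d * e = d' * e' := congrArg Subtype.val h
    have hde' : IsRelPrime d e' := (hab.of_dvd_left hd).of_dvd_right he'
    have hd'e : IsRelPrime d' e := (hab.of_dvd_left hd').of_dvd_right he
    have hdd : d = d' := dvd_antisymm
      (hde'.dvd_of_dvd_mul_right (h ▸ dvd_mul_right d e))
      (hd'e.dvd_of_dvd_mul_right (h ▸ dvd_mul_right d' e'))
    have hee : e = e' := dvd_antisymm
      (hd'e.symm.dvd_of_dvd_mul_left (h ▸ dvd_mul_left e d))
      (hde'.symm.dvd_of_dvd_mul_left (h ▸ dvd_mul_left e' d'))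
    subst hdd hee
    rfl
  · obtain ⟨d, e, hd, he, rfl⟩ := exists_dvd_and_dvd_of_dvd_mul hc
    exact ⟨(⟨d, hd⟩, ⟨e, he⟩), rfl⟩

theorem bijective_pow_dvd_prime_pow [IsCancelMulZero M] [Subsingleton Mˣ] {q : M} (hq : Prime q)
    (a : ℕ) :
    Function.Bijective fun t : Fin (a + 1) =>
      (⟨q ^ (t : ℕ), pow_dvd_pow q (Nat.lt_succ_iff.mp t.2)⟩ : {d // d ∣ q ^ a}) := by
  refine ⟨fun s t h => Fin.ext (pow_injective_of_not_isUnit hq.not_isUnit hq.ne_zero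
    (congrArg Subtype.val h)), fun ⟨d, hd⟩ => ?_⟩
  obtain ⟨t, hta, hdt⟩ := (dvd_prime_pow hq a).mp hd
  exact ⟨⟨t, Nat.lt_succ_of_le hta⟩, Subtype.ext (associated_iff_eq.mp hdt).symm⟩

variable {R : Type*} [CommSemiring R] [TopologicalSpace R] (f : M →* R)

theorem tsum_dvd_prime_pow [IsCancelMulZero M] [Subsingleton Mˣ] {q : M} (hq : Prime q)
    (a : ℕ) :
    ∑' d : {d // d ∣ q ^ a}, f d = ∑ t ∈ Finset.range (a + 1), f q ^ t := by
  rw [← (Equiv.ofBijective _ (bijective_pow_dvd_prime_pow hq a)).tsum_eq, tsum_fintype,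
    ← Fin.sum_univ_eq_sum_range (fun t => f q ^ t)]
  simp [map_pow]

theorem tsum_dvd_mul_of_isRelPrime [UniqueFactorizationMonoid M] [Unique Mˣ] {a b : M}
    (hab : IsRelPrime a b) (ha : a ≠ 0) (hb : b ≠ 0) :
    ∑' d : {d // d ∣ a * b}, f d = (∑' d : {d // d ∣ a}, f d) * ∑' d : {d // d ∣ b}, f d := by
  let := UniqueFactorizationMonoid.fintypeSubtypeDvd a ha
  let := UniqueFactorizationMonoid.fintypeSubtypeDvd b hb
  rw [← (Equiv.ofBijective _ (bijective_mul_dvd_of_isRelPrime hab)).tsum_eq, tsum_fintype,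
    tsum_fintype, tsum_fintype, Fintype.sum_mul_sum, ← Fintype.sum_prod_type']
  simp [map_mul]

end Divisors

section SigmaChi

variable {K : Type*} [Field K] [NumberField K] {m : ℕ} (χ : DirichletCharacter ℝ m) (r : ℝ)

noncomputable def chiNormRpow : Ideal (𝓞 K) →* ℝ where
  toFun J := χ ((Ideal.absNorm J : ℕ) : ZMod m) * (Ideal.absNorm J : ℝ) ^ (-r)
  map_one' := by simp
  map_mul' I J := by
    simp only [map_mul, Nat.cast_mul, Real.mul_rpow (Nat.cast_nonneg _) (Nat.cast_nonneg _)]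
    ring

theorem sigmaChi_eq_tsum (I : Ideal (𝓞 K)) :
    sigmaChi K χ r I = ∑' J : {J // J ∣ I}, chiNormRpow χ r (J : Ideal (𝓞 K)) := rfl

variable {χ r}

theorem abs_chiNormRpow_lt_one (hr : 0 < r) {q : Ideal (𝓞 K)} (hq : Prime q) :
    |chiNormRpow χ r q| < 1 := by
  have hN : 1 < (Ideal.absNorm q : ℝ) := by
    have h0 : Ideal.absNorm q ≠ 0 := Ideal.absNorm_eq_zero_iff.not.mpr hq.ne_zero
    have h1 : Ideal.absNorm q ≠ 1 :=
      Ideal.absNorm_eq_one_iff.not.mpr fun h => hq.not_isUnit (Ideal.isUnit_iff.mpr h)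
    exact_mod_cast Nat.one_lt_iff_ne_zero_and_ne_one.mpr ⟨h0, h1⟩
  calc |chiNormRpow χ r q|
      = ‖χ ((Ideal.absNorm q : ℕ) : ZMod m)‖ * (Ideal.absNorm q : ℝ) ^ (-r) := by
        rw [chiNormRpow, MonoidHom.coe_mk, OneHom.coe_mk, abs_mul, Real.norm_eq_abs,
          abs_of_nonneg (Real.rpow_nonneg (Nat.cast_nonneg _) _)]
    _ ≤ 1 * (Ideal.absNorm q : ℝ) ^ (-r) := by gcongr; exact χ.norm_le_one _
    _ < 1 := by rw [one_mul]; exact Real.rpow_lt_one_of_one_lt_of_neg hN (neg_lt_zero.mpr hr)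

theorem sigmaChi_prime_pow {q : Ideal (𝓞 K)} (hq : Prime q) (a : ℕ) :
    sigmaChi K χ r (q ^ a) = ∑ t ∈ Finset.range (a + 1), chiNormRpow χ r q ^ t :=
  (sigmaChi_eq_tsum χ r _).trans (tsum_dvd_prime_pow _ hq a)

theorem sigmaChi_prime_pow_mul {q J : Ideal (𝓞 K)} (hq : Prime q) (hJ : J ≠ 0) (hqJ : ¬q ∣ J)
    (a : ℕ) : sigmaChi K χ r (q ^ a * J) = sigmaChi K χ r (q ^ a) * sigmaChi K χ r J :=
  (sigmaChi_eq_tsum χ r _).trans <| tsum_dvd_mul_of_isRelPrime _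
    (hq.irreducible.isRelPrime_iff_not_dvd.mpr hqJ).pow_left (pow_ne_zero a hq.ne_zero) hJ

theorem sigmaChi_prime_pow_ne_zero (hr : 0 < r) {q : Ideal (𝓞 K)} (hq : Prime q) (a : ℕ) :
    sigmaChi K χ r (q ^ a) ≠ 0 := by
  rw [sigmaChi_prime_pow hq]
  exact geom_sum_ne_zero (neg_lt_of_abs_lt (abs_chiNormRpow_lt_one hr hq)).ne' a.succ_ne_zero

theorem sigmaChiInf_ne_zero (hr : 0 < r) {q : Ideal (𝓞 K)} (hq : Prime q) :
    sigmaChiInf K χ r q ≠ 0 :=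
  inv_ne_zero (sub_ne_zero.mpr (lt_of_abs_lt (abs_chiNormRpow_lt_one (χ := χ) hr hq)).ne')

theorem tendsto_sigmaChi_prime_pow (hr : 0 < r) {q : Ideal (𝓞 K)} (hq : Prime q) :
    Tendsto (fun a => sigmaChi K χ r (q ^ a)) atTop (𝓝 (sigmaChiInf K χ r q)) := by
  simp_rw [sigmaChi_prime_pow hq]
  exact ((hasSum_geometric_of_abs_lt_one (abs_chiNormRpow_lt_one hr hq)).tendsto_sum_nat).comp
    (tendsto_add_atTop_nat 1)

theorem image_sigmaChi_eq_iUnion_smul {P : Set (Ideal (𝓞 K))} (hP : ∀ q ∈ P, Prime q)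
    {p : Ideal (𝓞 K)} (hp : Prime p) (hpP : p ∉ P) :
    sigmaChi K χ r '' {I | I ≠ 0 ∧ ∀ q ∈ P, ¬q ∣ I} =
      ⋃ a : ℕ, sigmaChi K χ r (p ^ a) •
        sigmaChi K χ r '' {I | I ≠ 0 ∧ ∀ q, (q = p ∨ q ∈ P) → ¬q ∣ I} := by
  ext z
  constructor
  · rintro ⟨I, ⟨hI0, hIP⟩, rfl⟩
    obtain ⟨a, J, hpJ, rfl⟩ := WfDvdMonoid.max_power_factor hI0 hp.irreducible
    have hJ0 : J ≠ 0 := right_ne_zero_of_mul hI0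
    refine mem_iUnion.mpr ⟨a, _, ⟨J, ⟨hJ0, ?_⟩, rfl⟩, (sigmaChi_prime_pow_mul hp hJ0 hpJ a).symm⟩
    rintro q (rfl | hq) hqJ
    exacts [hpJ hqJ, hIP q hq (hqJ.mul_left _)]
  · rintro ⟨_, ⟨a, rfl⟩, _, ⟨J, ⟨hJ0, hJ⟩, rfl⟩, rfl⟩
    refine ⟨p ^ a * J, ⟨mul_ne_zero (pow_ne_zero a hp.ne_zero) hJ0, fun q hq hqI => ?_⟩,
      sigmaChi_prime_pow_mul hp hJ0 (hJ p (.inl rfl)) a⟩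
    rcases (hP q hq).dvd_or_dvd hqI with hqpa | hqJ
    · have hqp : q = p := associated_iff_eq.mp
        (((hP q hq).dvd_prime_iff_associated hp).mp ((hP q hq).dvd_of_dvd_pow hqpa))
      exact hpP (hqp ▸ hq)
    · exact hJ q (.inr hq) hqJ

end SigmaChi

theorem stmt7_general (r : ℝ) (hr : 1 < r) (K : Type*) [Field K] [NumberField K]
    (m : ℕ) (χ : DirichletCharacter ℝ m)
    (P : Finset (Ideal (𝓞 K))) (hP : ∀ q ∈ P, q.IsPrime ∧ q ≠ ⊥)
    (p : Ideal (𝓞 K)) (hp : p.IsPrime) (hp0 : p ≠ ⊥) (hpP : p ∉ P) :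
    closure (sigmaChi K χ r '' {I : Ideal (𝓞 K) | I ≠ 0 ∧ ∀ q ∈ P, ¬ q ∣ I}) =
      (⋃ a : ℕ, sigmaChi K χ r (p ^ a) •
        closure (sigmaChi K χ r ''
          {I : Ideal (𝓞 K) | I ≠ 0 ∧ ∀ q, (q = p ∨ q ∈ P) → ¬ q ∣ I})) ∪
      sigmaChiInf K χ r p •
        closure (sigmaChi K χ r ''
          {I : Ideal (𝓞 K) | I ≠ 0 ∧ ∀ q, (q = p ∨ q ∈ P) → ¬ q ∣ I}) := by
  have hr0 : 0 < r := zero_lt_one.trans hr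
  have hpp : Prime p := Ideal.prime_of_isPrime hp0 hp
  have hPp : ∀ q ∈ (P : Set (Ideal (𝓞 K))), Prime q := fun q hq =>
    Ideal.prime_of_isPrime (hP q hq).2 (hP q hq).1
  have himage := image_sigmaChi_eq_iUnion_smul (χ := χ) (r := r) hPp hpp
    (Finset.mem_coe.not.mpr hpP)
  simp only [Finset.mem_coe] at himage
  rw [himage]
  exact closure_iUnion_smul_of_tendsto (tendsto_sigmaChi_prime_pow hr0 hpp)
    (sigmaChi_prime_pow_ne_zero hr0 hpp) (sigmaChiInf_ne_zero hr0 hpp) _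

/-- With `𝒩_Q` the set of nonzero ideals not divisible by any prime in `Q`, the closure of
`σ_{r,K,χ}(𝒩_P)` equals the union, over `a ∈ ℤ_{≥0} ∪ {∞}`, of
`σ_{r,K,χ}(𝔭^a) · closure (σ_{r,K,χ}(𝒩_{P ∪ {𝔭}}))`. -/
theorem stmt7 (r : ℝ) (hr : 1 < r) (K : Type*) [Field K] [NumberField K]
    (m : ℕ) (hm : 0 < m) (χ : DirichletCharacter ℝ m)
    (hχ : ∀ a : ZMod m, χ a = -1 ∨ χ a = 0 ∨ χ a = 1)
    (P : Finset (Ideal (𝓞 K))) (hP : ∀ q ∈ P, q.IsPrime ∧ q ≠ ⊥)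
    (p : Ideal (𝓞 K)) (hp : p.IsPrime) (hp0 : p ≠ ⊥) (hpP : p ∉ P) :
    closure (sigmaChi K χ r '' {I : Ideal (𝓞 K) | I ≠ 0 ∧ ∀ q ∈ P, ¬ q ∣ I}) =
      (⋃ a : ℕ, sigmaChi K χ r (p ^ a) •
        closure (sigmaChi K χ r ''
          {I : Ideal (𝓞 K) | I ≠ 0 ∧ ∀ q, (q = p ∨ q ∈ P) → ¬ q ∣ I})) ∪
      sigmaChiInf K χ r p •
        closure (sigmaChi K χ r ''
          {I : Ideal (𝓞 K) | I ≠ 0 ∧ ∀ q, (q = p ∨ q ∈ P) → ¬ q ∣ I}) :=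
  stmt7_general r hr K m χ P hP p hp hp0 hpP
end

section
/- Let r > 1 be real, K a number field, χ a real Dirichlet character, 𝔭 a nonzero prime ideal of 𝓞_K, and 0 < α < β real numbers. Then the set ⋃_{a ∈ ℤ_{≥0} ∪ {∞}} σ_{r,K,χ}(𝔭^a) · [α, β] is a finite union of closed bounded intervals. Moreover, if χ(N(𝔭)) = 1 and a₀ is the least nonnegative integer with σ_{r,K,χ}(𝔭^{a₀+1}) / σ_{r,K,χ}(𝔭^{a₀}) ≤ β/α, then this set is a union of exactly a₀ + 1 pairwise disjoint closed bounded intervals. -/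
open NumberField
open scoped Pointwise

open Set Filter Topology

-- Part 1 abstract lemma
lemma part1_abstract (s : ℕ → ℝ) (L α β : ℝ) (h0α : 0 < α) (hαβ : α < β)
    (hpos : ∀ a, 0 < s a) (hL : 0 < L)
    (htend : Tendsto s atTop (𝓝 L)) :
    ∃ T : Finset (ℝ × ℝ),
      ((⋃ a : ℕ, Icc (s a * α) (s a * β)) ∪ Icc (L * α) (L * β))
        = ⋃ q ∈ T, Icc q.1 q.2 := by
  set ε : ℝ := L * (β - α) / (α + β) with hεdef
  have hε : 0 < ε := by
    apply div_pos (mul_pos hL (by linarith)) (by linarith)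
  have hkey : (L + ε) * α ≤ (L - ε) * β := by
    have h1 : ε * (α + β) = L * (β - α) := by
      rw [hεdef, div_mul_cancel₀ _ (ne_of_gt (by linarith : (0:ℝ) < α + β))]
    nlinarith
  obtain ⟨A, hA⟩ := Metric.tendsto_atTop.mp htend ε hε
  set C : Set ℝ := insert L (Set.range fun n => s (n + A)) with hCdef
  have hCc : IsCompact C := (htend.comp (tendsto_add_atTop_nat A)).isCompact_insert_range
  have hCpos : ∀ c ∈ C, 0 < c := by
    rintro c (rfl | ⟨n, rfl⟩)
    · exact hL
    · exact hpos _
  have hCball : ∀ c ∈ C, L - ε ≤ c ∧ c ≤ L + ε := by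
    rintro c (rfl | ⟨n, rfl⟩)
    · constructor <;> linarith
    · have := hA (n + A) (Nat.le_add_left A n)
      rw [Real.dist_eq, abs_lt] at this
      constructor <;> linarith [this.1, this.2]
  set J : Set ℝ := ⋃ c ∈ C, Icc (c * α) (c * β) with hJdef
  have hJim : J = (fun pr : ℝ × ℝ => pr.1 * pr.2) '' (C ×ˢ Icc α β) := by
    ext y
    simp only [hJdef, mem_iUnion, mem_image, mem_prod, mem_Icc, Prod.exists, exists_prop]
    constructor
    · rintro ⟨c, hc, h1, h2⟩
      have hc0 : 0 < c := hCpos c hc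
      refine ⟨c, y / c, ⟨hc, ?_, ?_⟩, ?_⟩
      · rw [le_div_iff₀ hc0]; linarith [h1]
      · rw [div_le_iff₀ hc0]; linarith [h2]
      · field_simp
    · rintro ⟨c, t, ⟨hc, ht1, ht2⟩, rfl⟩
      have hc0 : 0 < c := hCpos c hc
      exact ⟨c, hc, by nlinarith, by nlinarith⟩
  have hJcomp : IsCompact J := by
    rw [hJim]
    exact (hCc.prod isCompact_Icc).image continuous_mul
  have hJconn : IsPreconnected J := by
    rw [hJdef, Set.biUnion_eq_iUnion]
    apply isPreconnected_iUnion
    · refine ⟨(L - ε) * β, ?_⟩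
      rw [mem_iInter]
      rintro ⟨c, hc⟩
      obtain ⟨h1, h2⟩ := hCball c hc
      refine mem_Icc.mpr ⟨?_, ?_⟩
      · calc c * α ≤ (L + ε) * α := by nlinarith
          _ ≤ (L - ε) * β := hkey
      · nlinarith
    · intro i; exact isPreconnected_Icc
  have hJne : J.Nonempty := by
    refine ⟨L * α, ?_⟩
    rw [hJdef]
    exact mem_biUnion (mem_insert L _) (mem_Icc.mpr ⟨le_rfl, by nlinarith⟩)
  obtain ⟨u, hu⟩ := hJcomp.exists_isLeast hJne
  obtain ⟨v, hv⟩ := hJcomp.exists_isGreatest hJne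
  have hJeq : J = Icc u v := by
    apply Subset.antisymm
    · exact fun y hy => mem_Icc.mpr ⟨hu.2 hy, hv.2 hy⟩
    · exact hJconn.ordConnected.out hu.1 hv.1
  refine ⟨((Finset.range A).image fun a => (s a * α, s a * β)) ∪ {(u, v)}, ?_⟩
  ext y
  simp only [mem_union, mem_iUnion, Finset.mem_union, Finset.mem_image, Finset.mem_range,
    Finset.mem_singleton, mem_Icc, exists_prop]
  constructor
  · rintro (⟨a, hy⟩ | hy)
    · by_cases ha : a < A
      · exact ⟨(s a * α, s a * β), Or.inl ⟨a, ha, rfl⟩, hy⟩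
      · push_neg at ha
        have hsC : s a ∈ C := by
          rw [hCdef]
          refine mem_insert_of_mem _ ⟨a - A, ?_⟩
          show s (a - A + A) = s a
          rw [Nat.sub_add_cancel ha]
        have : y ∈ J := mem_biUnion hsC (mem_Icc.mpr hy)
        rw [hJeq] at this
        exact ⟨(u, v), Or.inr rfl, mem_Icc.mp this⟩
    · have : y ∈ J := mem_biUnion (mem_insert L _) (mem_Icc.mpr hy)
      rw [hJeq] at this
      exact ⟨(u, v), Or.inr rfl, mem_Icc.mp this⟩
  · rintro ⟨q, hq | rfl, hy⟩
    · obtain ⟨a, _, rfl⟩ := hq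
      exact Or.inl ⟨a, hy⟩
    · have : y ∈ J := by rw [hJeq]; exact mem_Icc.mpr hy
      rw [hJdef] at this
      obtain ⟨c, hc, hyc⟩ := mem_iUnion₂.mp this
      rw [hCdef] at hc
      rcases hc with rfl | ⟨n, rfl⟩
      · exact Or.inr (mem_Icc.mp hyc)
      · exact Or.inl ⟨n + A, mem_Icc.mp hyc⟩

-- Part 2 abstract lemma
lemma part2_abstract (s : ℕ → ℝ) (L α β : ℝ) (h0α : 0 < α) (hαβ : α < β)
    (hpos : ∀ a, 0 < s a) (hmono : Monotone s) (hsL : ∀ a, s a ≤ L)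
    (htend : Tendsto s atTop (𝓝 L))
    (a₀ : ℕ)
    (hlow : ∀ i < a₀, s i * β < s (i + 1) * α)
    (hstep : ∀ a, a₀ ≤ a → s (a + 1) * α ≤ s a * β) :
    ∃ f : Fin (a₀ + 1) → ℝ × ℝ,
      (∀ i, (f i).1 ≤ (f i).2) ∧
      Pairwise (Function.onFun Disjoint fun i => Icc (f i).1 (f i).2) ∧
      ((⋃ a : ℕ, Icc (s a * α) (s a * β)) ∪ Icc (L * α) (L * β))
        = ⋃ i, Icc (f i).1 (f i).2 := by
  classical
  refine ⟨fun i => (s i * α, if (i : ℕ) = a₀ then L * β else s i * β), ?_, ?_, ?_⟩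
  · intro i
    dsimp only
    split_ifs with h
    · have := hsL (i : ℕ); nlinarith [hpos (i : ℕ)]
    · nlinarith [hpos (i : ℕ)]
  · -- pairwise disjoint
    have key : ∀ i j : Fin (a₀ + 1), (i : ℕ) < (j : ℕ) →
        Disjoint (Icc (s i * α) (if (i : ℕ) = a₀ then L * β else s i * β))
          (Icc (s j * α) (if (j : ℕ) = a₀ then L * β else s j * β)) := by
      intro i j hij
      have hja : (j : ℕ) ≤ a₀ := Nat.lt_succ_iff.mp j.2
      have hia : (i : ℕ) < a₀ := lt_of_lt_of_le hij hja
      rw [if_neg (Nat.ne_of_lt hia)]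
      rw [Set.disjoint_left]
      intro y hy1 hy2
      have h1 : y ≤ s i * β := (mem_Icc.mp hy1).2
      have h2 : s (j : ℕ) * α ≤ y := (mem_Icc.mp hy2).1
      have h3 : s ((i : ℕ) + 1) * α ≤ s (j : ℕ) * α :=
        mul_le_mul_of_nonneg_right (hmono hij) h0α.le
      have h4 := hlow (i : ℕ) hia
      linarith
    intro i j hne
    rcases lt_or_gt_of_ne (fun h : (i : ℕ) = (j : ℕ) => hne (Fin.ext h)) with h | h
    · exact key i j h
    · exact (key j i h).symm
  · -- set equality
    ext y
    simp only [mem_union, mem_iUnion, mem_Icc]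
    constructor
    · rintro (⟨a, hy⟩ | hy)
      · by_cases ha : a < a₀
        · refine ⟨⟨a, by omega⟩, ?_⟩
          rw [if_neg (by simpa using Nat.ne_of_lt ha)]
          exact hy
        · push_neg at ha
          refine ⟨⟨a₀, Nat.lt_succ_self _⟩, ?_⟩
          rw [if_pos rfl]
          dsimp only
          constructor
          · calc s a₀ * α ≤ s a * α := mul_le_mul_of_nonneg_right (hmono ha) h0α.le
              _ ≤ y := hy.1
          · calc y ≤ s a * β := hy.2
              _ ≤ L * β := mul_le_mul_of_nonneg_right (hsL a) (by linarith)
      · refine ⟨⟨a₀, Nat.lt_succ_self _⟩, ?_⟩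
        rw [if_pos rfl]
        dsimp only
        constructor
        · calc s a₀ * α ≤ L * α := mul_le_mul_of_nonneg_right (hsL a₀) h0α.le
            _ ≤ y := hy.1
        · exact hy.2
    · rintro ⟨i, hy⟩
      by_cases hi : (i : ℕ) = a₀
      · rw [if_pos hi] at hy
        rw [hi] at hy
        by_cases hyL : L * α ≤ y
        · exact Or.inr ⟨hyL, hy.2⟩
        · push_neg at hyL
          -- find greatest b with s b * α ≤ y
          have hTend : Tendsto (fun a => s a * α) atTop (𝓝 (L * α)) := htend.mul_const α
          have hEv : ∀ᶠ a in atTop, y < s a * α := hTend.eventually (eventually_gt_nhds hyL)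
          obtain ⟨N, hN⟩ := eventually_atTop.mp hEv
          have hPa₀ : s a₀ * α ≤ y := hy.1
          have ha₀N : a₀ < N := by
            by_contra h
            push_neg at h
            exact absurd hPa₀ (not_le.mpr (hN a₀ h))
          set P : ℕ → Prop := fun a => s a * α ≤ y with hPdef
          set b : ℕ := Nat.findGreatest P N with hbdef
          have hPb : P b := Nat.findGreatest_spec ha₀N.le hPa₀
          have ha₀b : a₀ ≤ b := Nat.le_findGreatest ha₀N.le hPa₀
          have hble : b ≤ N := Nat.findGreatest_le N
          have hbN : b < N := by
            rcases lt_or_eq_of_le hble with h | h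
            · exact h
            · rw [h] at hPb
              exact absurd hPb (not_le.mpr (hN N le_rfl))
          have hnPb1 : ¬ P (b + 1) := Nat.findGreatest_is_greatest (Nat.lt_succ_self b) hbN
          left
          refine ⟨b, hPb, ?_⟩
          have : y < s (b + 1) * α := not_le.mp hnPb1
          linarith [hstep b ha₀b]
      · rw [if_neg hi] at hy
        exact Or.inl ⟨(i : ℕ), hy⟩


lemma sigmaChi_pow (K : Type*) [Field K] [NumberField K] {m : ℕ}
    (χ : DirichletCharacter ℝ m) (r : ℝ) (p : Ideal (𝓞 K)) (hp : p.IsPrime) (hp0 : p ≠ ⊥)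
    (a : ℕ) :
    sigmaChi K χ r (p ^ a)
      = ∑ t ∈ Finset.range (a + 1),
          (χ ((Ideal.absNorm p : ℕ) : ZMod m) * (Ideal.absNorm p : ℝ) ^ (-r)) ^ t := by
  classical
  have hprime : Prime p := Ideal.prime_of_isPrime hp0 hp
  have hq2 : 2 ≤ Ideal.absNorm p := by
    have h0 : Ideal.absNorm p ≠ 0 := by
      simpa [Ideal.absNorm_eq_zero_iff] using hp0
    have h1 : Ideal.absNorm p ≠ 1 := by
      simpa [Ideal.absNorm_eq_one_iff] using hp.ne_top
    omega
  have hinj : ∀ t₁ t₂ : ℕ, p ^ t₁ = p ^ t₂ → t₁ = t₂ := by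
    intro t₁ t₂ h
    have := congrArg Ideal.absNorm h
    rw [map_pow, map_pow] at this
    exact Nat.pow_right_injective hq2 this
  let e : Fin (a + 1) → {J : Ideal (𝓞 K) // J ∣ p ^ a} :=
    fun t => ⟨p ^ (t : ℕ), pow_dvd_pow p (Nat.lt_succ_iff.mp t.2)⟩
  have hbij : Function.Bijective e := by
    constructor
    · intro t₁ t₂ h
      exact Fin.ext (hinj _ _ (congrArg Subtype.val h))
    · rintro ⟨J, hJ⟩
      obtain ⟨t, ht, hassoc⟩ := (dvd_prime_pow hprime a).mp hJ
      refine ⟨⟨t, Nat.lt_succ_iff.mpr ht⟩, ?_⟩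
      exact Subtype.ext (associated_iff_eq.mp hassoc).symm
  rw [sigmaChi, ← Equiv.tsum_eq (Equiv.ofBijective e hbij), tsum_fintype,
    ← Fin.sum_univ_eq_sum_range]
  apply Finset.sum_congr rfl
  intro t _
  show χ ((Ideal.absNorm (p ^ (t : ℕ)) : ℕ) : ZMod m) * (Ideal.absNorm (p ^ (t : ℕ)) : ℝ) ^ (-r)
      = _
  have hq0 : (0 : ℝ) ≤ (Ideal.absNorm p : ℝ) := Nat.cast_nonneg _
  rw [map_pow, Nat.cast_pow, Nat.cast_pow, map_pow, mul_pow]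
  congr 1
  rw [← Real.rpow_natCast (Ideal.absNorm p : ℝ) (t : ℕ), ← Real.rpow_mul hq0,
    mul_comm ((t : ℕ) : ℝ) (-r), Real.rpow_mul hq0, Real.rpow_natCast]

/-- The set `⋃_{a ∈ ℤ_{≥0} ∪ {∞}} σ_{r,K,χ}(𝔭^a) · [α, β]` is a finite union of closed bounded
intervals; if moreover `χ(N(𝔭)) = 1` and `a₀` is the least nonnegative integer with
`σ_{r,K,χ}(𝔭^{a₀+1})/σ_{r,K,χ}(𝔭^{a₀}) ≤ β/α`, it is a union of exactly `a₀ + 1` pairwise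
disjoint closed bounded intervals. -/
theorem stmt8 (r : ℝ) (hr : 1 < r) (K : Type*) [Field K] [NumberField K]
    (m : ℕ) (hm : 0 < m) (χ : DirichletCharacter ℝ m)
    (hχ : ∀ a : ZMod m, χ a = -1 ∨ χ a = 0 ∨ χ a = 1)
    (p : Ideal (𝓞 K)) (hp : p.IsPrime) (hp0 : p ≠ ⊥)
    (α β : ℝ) (h0α : 0 < α) (hαβ : α < β) :
    (∃ T : Finset (ℝ × ℝ),
      (⋃ a : ℕ, sigmaChi K χ r (p ^ a) • Set.Icc α β) ∪
          sigmaChiInf K χ r p • Set.Icc α β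
        = ⋃ q ∈ T, Set.Icc q.1 q.2) ∧
    (χ ((Ideal.absNorm p : ℕ) : ZMod m) = 1 →
      ∀ a₀ : ℕ,
        IsLeast {a : ℕ |
          sigmaChi K χ r (p ^ (a + 1)) / sigmaChi K χ r (p ^ a) ≤ β / α} a₀ →
        ∃ f : Fin (a₀ + 1) → ℝ × ℝ,
          (∀ i, (f i).1 ≤ (f i).2) ∧
          Pairwise (Function.onFun Disjoint fun i => Set.Icc (f i).1 (f i).2) ∧
          (⋃ a : ℕ, sigmaChi K χ r (p ^ a) • Set.Icc α β) ∪
              sigmaChiInf K χ r p • Set.Icc α β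
            = ⋃ i, Set.Icc (f i).1 (f i).2) := by
  classical
  set S : ℕ → ℝ := fun a => sigmaChi K χ r (p ^ a) with hSdef
  set L : ℝ := sigmaChiInf K χ r p with hLdef
  set X : ℝ := χ ((Ideal.absNorm p : ℕ) : ZMod m) * (Ideal.absNorm p : ℝ) ^ (-r) with hXdef
  have hS : ∀ a : ℕ, S a = ∑ t ∈ Finset.range (a + 1), X ^ t := fun a =>
    sigmaChi_pow K χ r p hp hp0 a
  have hq2 : 2 ≤ Ideal.absNorm p := by
    have h0 : Ideal.absNorm p ≠ 0 := by
      simpa [Ideal.absNorm_eq_zero_iff] using hp0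
    have h1 : Ideal.absNorm p ≠ 1 := by
      simpa [Ideal.absNorm_eq_one_iff] using hp.ne_top
    omega
  have hq1 : (1 : ℝ) < (Ideal.absNorm p : ℝ) := by exact_mod_cast hq2
  have hrp_pos : 0 < (Ideal.absNorm p : ℝ) ^ (-r) :=
    Real.rpow_pos_of_pos (by linarith) _
  have hrp_lt1 : (Ideal.absNorm p : ℝ) ^ (-r) < 1 :=
    Real.rpow_lt_one_of_one_lt_of_neg hq1 (by linarith)
  have hχabs : |χ ((Ideal.absNorm p : ℕ) : ZMod m)| ≤ 1 := by
    rcases hχ ((Ideal.absNorm p : ℕ) : ZMod m) with h | h | h <;> rw [h] <;> norm_num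
  have hXabs : |X| < 1 := by
    rw [hXdef, abs_mul, abs_of_pos hrp_pos]
    calc |χ ((Ideal.absNorm p : ℕ) : ZMod m)| * (Ideal.absNorm p : ℝ) ^ (-r)
        ≤ 1 * (Ideal.absNorm p : ℝ) ^ (-r) := mul_le_mul_of_nonneg_right hχabs hrp_pos.le
      _ < 1 := by rw [one_mul]; exact hrp_lt1
  have hXlt1 : X < 1 := lt_of_le_of_lt (le_abs_self X) hXabs
  have spos : ∀ a, 0 < S a := by
    intro a
    rw [hS a, geom_sum_eq (ne_of_lt hXlt1) (a + 1)]
    apply div_pos_of_neg_of_neg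
    · have h1 : X ^ (a + 1) ≤ |X| ^ (a + 1) := by
        rw [← abs_pow]; exact le_abs_self _
      have h2 : |X| ^ (a + 1) < 1 := pow_lt_one₀ (abs_nonneg X) hXabs (Nat.succ_ne_zero a)
      linarith
    · linarith
  have hLX : L = (1 - X)⁻¹ := by rw [hXdef, hLdef, sigmaChiInf]
  have hLpos : 0 < L := by
    rw [hLX]
    exact inv_pos.mpr (by linarith [neg_abs_le X, hXabs])
  have htend : Filter.Tendsto S Filter.atTop (nhds L) := by
    rw [hLX]
    have h1 := (hasSum_geometric_of_norm_lt_one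
      (by rwa [Real.norm_eq_abs] : ‖X‖ < 1)).tendsto_sum_nat
    have h2 := h1.comp (tendsto_add_atTop_nat 1)
    have : ∀ a : ℕ, ((fun n => ∑ i ∈ Finset.range n, X ^ i) ∘ fun a => a + 1) a = S a := by
      intro a; rw [hS a]; rfl
    exact Filter.Tendsto.congr this h2
  have hsmul : ∀ a : ℕ, S a • Set.Icc α β = Set.Icc (S a * α) (S a * β) := by
    intro a
    rw [LinearOrderedField.smul_Icc (spos a)]
  have hsmulL : L • Set.Icc α β = Set.Icc (L * α) (L * β) := by
    rw [LinearOrderedField.smul_Icc hLpos]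
  have hgoalrw :
      (⋃ a : ℕ, sigmaChi K χ r (p ^ a) • Set.Icc α β) ∪ sigmaChiInf K χ r p • Set.Icc α β
        = (⋃ a : ℕ, Set.Icc (S a * α) (S a * β)) ∪ Set.Icc (L * α) (L * β) := by
    rw [← hSdef, ← hLdef] at *
    rw [hsmulL]
    congr 1
    exact Set.iUnion_congr hsmul
  constructor
  · obtain ⟨T, hT⟩ := part1_abstract S L α β h0α hαβ spos hLpos htend
    exact ⟨T, by rw [hgoalrw, hT]⟩
  · intro hχ1 a₀ hleast
    have hX0 : 0 < X := by rw [hXdef, hχ1, one_mul]; exact hrp_pos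
    have hsucc : ∀ a : ℕ, S (a + 1) = S a + X ^ (a + 1) := by
      intro a
      rw [hS (a + 1), hS a, Finset.sum_range_succ]
    have hmono : Monotone S := by
      apply monotone_nat_of_le_succ
      intro a
      rw [hsucc a]
      nlinarith [pow_pos hX0 (a + 1)]
    have hsL : ∀ a, S a ≤ L := by
      intro a
      have hmul : S a * (1 - X) = 1 - X ^ (a + 1) := by
        have h := geom_sum_mul X (a + 1)
        rw [hS a]; linear_combination -h
      rw [hLX, inv_eq_one_div, le_div_iff₀ (by linarith : (0:ℝ) < 1 - X), hmul]
      nlinarith [pow_pos hX0 (a + 1)]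
    -- translate the IsLeast condition
    have hmem_iff : ∀ a : ℕ, (S (a + 1) / S a ≤ β / α ↔ S (a + 1) * α ≤ S a * β) := by
      intro a
      rw [div_le_div_iff₀ (spos a) h0α]
      constructor <;> intro h <;> nlinarith
    have hbase : S (a₀ + 1) * α ≤ S a₀ * β := (hmem_iff a₀).mp hleast.1
    have hlow : ∀ i < a₀, S i * β < S (i + 1) * α := by
      intro i hi
      by_contra h
      push_neg at h
      have : a₀ ≤ i := hleast.2 ((hmem_iff i).mpr h)
      omega
    have hstep : ∀ a, a₀ ≤ a → S (a + 1) * α ≤ S a * β := by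
      intro a ha
      have hXa : X ^ (a + 1) ≤ X ^ (a₀ + 1) :=
        pow_le_pow_of_le_one hX0.le hXlt1.le (by omega)
      have hm : S a₀ ≤ S a := hmono ha
      rw [hsucc a]
      rw [hsucc a₀] at hbase
      nlinarith
    obtain ⟨f, hf1, hf2, hf3⟩ :=
      part2_abstract S L α β h0α hαβ spos hmono hsL htend a₀ hlow hstep
    exact ⟨f, hf1, hf2, by rw [hgoalrw, hf3]⟩
end

section
/- Let r > 1 be a real number and let d be an odd positive integer with d ≤ 2r − 2. Then d^{-r} > ∑_{n ≥ d+2, n odd} n^{-r}, where the sum is over all odd integers n ≥ d + 2. -/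
/-!
Comparing with the integral of `t ^ (-r)`: by the mean value theorem applied to `t ^ (1 - r)`,
`(x + 2) ^ (-r) < (x ^ (1 - r) - (x + 2) ^ (1 - r)) / (2 (r - 1))` for `x > 0`. Summing over
`x = d, d + 2, d + 4, …` telescopes, so the tail is below `d ^ (1 - r) / (2 (r - 1))`, which is at
most `d ^ (-r)` exactly when `d ≤ 2 r - 2`. The odd `n ≥ d + 2` dominate distinct terms
`d + 2 + 2 k ≤ n`, so their sum is bounded by this tail.
-/

open Set

lemma rpow_neg_lt_sub_rpow_div {r x h : ℝ} (hr : 1 < r) (hx : 0 < x) (hh : 0 < h) :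
    (x + h) ^ (-r) < (x ^ (1 - r) - (x + h) ^ (1 - r)) / (h * (r - 1)) := by
  obtain ⟨c, ⟨hxc, hch⟩, hslope⟩ := exists_hasDerivAt_eq_slope (fun t => t ^ (1 - r))
    (fun t => (1 - r) * t ^ (1 - r - 1)) (lt_add_of_pos_right x hh)
    (fun t ht => (Real.continuousAt_rpow_const t _
      (Or.inl (hx.trans_le ht.1).ne')).continuousWithinAt)
    (fun t ht => Real.hasDerivAt_rpow_const (Or.inl (hx.trans ht.1).ne'))
  have hc : c ^ (-r) = (x ^ (1 - r) - (x + h) ^ (1 - r)) / (h * (r - 1)) := by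
    rw [show 1 - r - 1 = -r by ring, add_sub_cancel_left, eq_div_iff hh.ne'] at hslope
    rw [eq_div_iff (by nlinarith)]
    linear_combination -hslope
  rw [← hc]
  exact Real.rpow_lt_rpow_of_neg (hx.trans hxc) hch (by linarith)

lemma tsum_add_mul_rpow_neg_lt {r a h : ℝ} (hr : 1 < r) (ha : 0 < a) (hh : 0 < h) :
    Summable (fun k : ℕ => (a + h * (k + 1)) ^ (-r)) ∧
      ∑' k : ℕ, (a + h * (k + 1)) ^ (-r) < a ^ (1 - r) / (h * (r - 1)) := by
  set g : ℕ → ℝ := fun k => (a + h * k) ^ (1 - r) / (h * (r - 1))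
  have hlt (k : ℕ) : (a + h * (k + 1)) ^ (-r) < g k - g (k + 1) := by
    have := rpow_neg_lt_sub_rpow_div hr (by positivity : 0 < a + h * k) hh
    simp only [g]; push_cast
    rw [← sub_div, show a + h * (k + 1) = a + h * k + h by ring]
    exact this
  have hg_nonneg (k : ℕ) : 0 ≤ g k := div_nonneg (by positivity) (by nlinarith)
  have hpartial (n : ℕ) : ∑ k ∈ Finset.range n, (g k - g (k + 1)) ≤ g 0 := by
    rw [Finset.sum_range_sub']
    linarith [hg_nonneg n]
  have hsum_tel : Summable fun k => g k - g (k + 1) :=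
    summable_of_sum_range_le (fun k => (by positivity : (0:ℝ) ≤ _).trans (hlt k).le) hpartial
  have hsum : Summable fun k : ℕ => (a + h * (k + 1)) ^ (-r) :=
    hsum_tel.of_nonneg_of_le (fun k => by positivity) (fun k => (hlt k).le)
  refine ⟨hsum, ?_⟩
  calc ∑' k : ℕ, (a + h * (k + 1)) ^ (-r) < ∑' k, (g k - g (k + 1)) :=
        hsum.tsum_lt_tsum (fun k => (hlt k).le) (hlt 0) hsum_tel
    _ ≤ g 0 := hsum_tel.tsum_le_of_sum_range_le hpartial
    _ = a ^ (1 - r) / (h * (r - 1)) := by simp [g]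

lemma tsum_subtype_odd_le_tsum_add_two_mul {f : ℕ → ℝ} {m : ℕ} (hf : ∀ n, 0 ≤ f n)
    (hanti : AntitoneOn f (Ici m)) (hs : Summable fun k => f (m + 2 * k)) :
    ∑' n : {n : ℕ // Odd n ∧ m ≤ n}, f n ≤ ∑' k, f (m + 2 * k) := by
  set i : {n : ℕ // Odd n ∧ m ≤ n} → ℕ := fun n => (n - m) / 2
  have hi : Function.Injective i := by
    rintro ⟨n, ⟨a, rfl⟩, hn⟩ ⟨n', ⟨a', rfl⟩, hn'⟩ h
    simp only [i] at h
    ext; simp only; omega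
  have hle (n : {n : ℕ // Odd n ∧ m ≤ n}) : f n ≤ f (m + 2 * i n) := by
    have := n.2.2
    exact hanti (mem_Ici.2 (by omega)) (mem_Ici.2 this) (by simp only [i]; omega)
  have hsi : Summable fun n => f (m + 2 * i n) := hs.comp_injective hi
  have hsum : Summable fun n : {n : ℕ // Odd n ∧ m ≤ n} => f n :=
    Summable.of_nonneg_of_le (fun n => hf n) hle hsi
  calc ∑' n : {n : ℕ // Odd n ∧ m ≤ n}, f n ≤ ∑' n, f (m + 2 * i n) :=
        hsum.tsum_le_tsum hle hsi
    _ ≤ ∑' k, f (m + 2 * k) := tsum_comp_le_tsum_of_inj hs (fun _ => hf _) hi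

theorem stmt10_general (r : ℝ) (hr : 1 < r) (d : ℕ) (hd : 0 < d)
    (hdr : (d : ℝ) ≤ 2 * r - 2) :
    ∑' n : {n : ℕ // Odd n ∧ d + 2 ≤ n}, ((n : ℕ) : ℝ) ^ (-r) < (d : ℝ) ^ (-r) := by
  have hdpos : (0 : ℝ) < d := by exact_mod_cast hd
  have hcast (k : ℕ) : ((d + 2 + 2 * k : ℕ) : ℝ) = d + 2 * (k + 1) := by push_cast; ring
  obtain ⟨hsum, hlt⟩ := tsum_add_mul_rpow_neg_lt hr hdpos two_pos
  simp only [← hcast] at hsum hlt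
  have hanti : AntitoneOn (fun n : ℕ => (n : ℝ) ^ (-r)) (Ici (d + 2)) := fun m hm n _ hmn =>
    Real.rpow_le_rpow_of_nonpos (Nat.cast_pos.2 (lt_of_lt_of_le (by omega) hm))
      (by exact_mod_cast hmn) (by linarith)
  calc ∑' n : {n : ℕ // Odd n ∧ d + 2 ≤ n}, ((n : ℕ) : ℝ) ^ (-r)
      ≤ ∑' k : ℕ, ((d + 2 + 2 * k : ℕ) : ℝ) ^ (-r) :=
        tsum_subtype_odd_le_tsum_add_two_mul (fun n => by positivity) hanti hsum
    _ < (d : ℝ) ^ (1 - r) / (2 * (r - 1)) := hlt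
    _ ≤ (d : ℝ) ^ (-r) := by
      rw [show (1 : ℝ) - r = 1 + -r by ring, Real.rpow_add hdpos, Real.rpow_one,
        div_le_iff₀ (by linarith)]
      nlinarith [Real.rpow_pos_of_pos hdpos (-r)]

/-- For real `r > 1` and an odd positive integer `d ≤ 2r − 2`,
`d^{-r} > ∑_{n ≥ d+2, n odd} n^{-r}`. -/
theorem stmt10 (r : ℝ) (hr : 1 < r) (d : ℕ) (hodd : Odd d) (hd : 0 < d)
    (hdr : (d : ℝ) ≤ 2 * r - 2) :
    ∑' n : {n : ℕ // Odd n ∧ d + 2 ≤ n}, ((n : ℕ) : ℝ) ^ (-r) < (d : ℝ) ^ (-r) :=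
  stmt10_general r hr d hd hdr
end

section
/- Let r > 1 be real and let i ≥ 1 be an integer. Writing p_k for the k-th prime and ζ_i(r) = ∏_{k>i} (1 − p_k^{-r})^{-1}, one has ζ_{i+1}(r) − 1 > 3^{-r} · (ζ_i(r) − 1). -/
/-- `p_j`, the `j`-th rational prime (`1`-indexed: `pr 1 = 2`, `pr 2 = 3`, …). -/
noncomputable def pr (j : ℕ) : ℕ := Nat.nth Nat.Prime (j - 1)

/-- `ζ_i(r) = ∏_{k > i} (1 − p_k^{-r})⁻¹`. -/
noncomputable def zetaTail (r : ℝ) (i : ℕ) : ℝ :=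
  ∏' k : {k : ℕ // i < k}, (1 - (pr (k : ℕ) : ℝ) ^ (-r))⁻¹

/-!
Since `ζ_i = (1 - x)⁻¹ ζ_{i+1}` with `x = p_{i+1}^{-r}`, the claim is equivalent to
`3^{-r} x < (ζ_{i+1} - 1)(1 - x - 3^{-r})`, and `ζ_{i+1} - 1 ≥ p_{i+2}^{-r} + p_{i+3}^{-r}`.
For `i = 1` this is an inequality between powers of `3, 5, 7, 9`; for `i ≥ 2` Bertrand's postulate
gives `p_{i+2} < 2 p_{i+1}` and `p_{i+3} < 4 p_{i+1}`, and `2^{-r} + 4^{-r} ≥ (9/4) 3^{-r}` closes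
the gap. Every comparison of powers comes from `c ↦ c^{1-r}` being antitone for `r ≥ 1`.
-/

open Real

lemma pr_mono : Monotone pr := fun _ _ hab =>
  (Nat.nth_le_nth Nat.infinite_setOfPred_prime).2 (Nat.sub_le_sub_right hab 1)

lemma add_one_le_pr (j : ℕ) : j + 1 ≤ pr j := by
  have := Nat.add_two_le_nth_prime (j - 1)
  rw [pr]
  omega

lemma pr_two : pr 2 = 3 := Nat.nth_prime_one_eq_three

lemma pr_three : pr 3 = 5 := Nat.nth_prime_two_eq_five

lemma pr_four : pr 4 = 7 := Nat.nth_prime_three_eq_seven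

lemma Nat.nth_prime_succ_lt_two_mul (n : ℕ) :
    Nat.nth Nat.Prime (n + 1) < 2 * Nat.nth Nat.Prime n := by
  set p := Nat.nth Nat.Prime n
  have hp : 2 ≤ p := (Nat.prime_nth_prime n).two_le
  obtain ⟨q, hq, hpq, hq2p⟩ := Nat.exists_prime_lt_and_le_two_mul p (by omega)
  have hq_ne : q ≠ 2 * p := fun h => Nat.not_prime_mul (by norm_num) (by omega) (h ▸ hq)
  have hle : Nat.nth Nat.Prime (n + 1) ≤ q :=
    not_lt.1 fun h => (Nat.le_nth_of_lt_nth_succ h hq).not_gt hpq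
  omega

lemma mul_rpow_neg_le_mul_rpow_neg {a b r : ℝ} (ha : 0 < a) (hab : a ≤ b) (hr : 1 ≤ r) :
    b * b ^ (-r) ≤ a * a ^ (-r) := by
  have key : ∀ c : ℝ, 0 < c → c * c ^ (-r) = c ^ (1 - r) := fun c hc => by
    rw [sub_eq_add_neg, rpow_add hc, rpow_one]
  rw [key a ha, key b (ha.trans_le hab)]
  exact rpow_le_rpow_of_nonpos ha hab (by linarith)

lemma pr_rpow_neg_pos (r : ℝ) (j : ℕ) : 0 < (pr j : ℝ) ^ (-r) :=
  rpow_pos_of_pos (by exact_mod_cast (Nat.prime_nth_prime _).pos) _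

lemma pr_rpow_neg_lt_one {r : ℝ} (hr : 1 ≤ r) (j : ℕ) : (pr j : ℝ) ^ (-r) < 1 := by
  have h2 : (2 : ℝ) ≤ pr j := by exact_mod_cast (Nat.prime_nth_prime _).two_le
  have := mul_rpow_neg_le_mul_rpow_neg one_pos (by linarith) hr (b := pr j)
  rw [one_rpow, mul_one] at this
  nlinarith [pr_rpow_neg_pos r j]

lemma summable_pr_rpow_neg {r : ℝ} (hr : 1 < r) :
    Summable fun k : ℕ => (pr k : ℝ) ^ (-r) := by
  have hs : Summable fun k : ℕ => ((k + 1 : ℕ) : ℝ) ^ (-r) :=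
    (summable_nat_add_iff 1).2 (Real.summable_nat_rpow.2 (by linarith))
  refine hs.of_nonneg_of_le (fun k => (pr_rpow_neg_pos r k).le) fun k => ?_
  exact rpow_le_rpow_of_nonpos (by positivity) (by exact_mod_cast add_one_le_pr k) (by linarith)

lemma multipliable_inv_one_sub {ι : Type*} {u : ι → ℝ} (hu : Summable u)
    (hu1 : ∀ i, u i < 1) : Multipliable fun i => (1 - u i)⁻¹ := by
  refine Real.multipliable_of_summable_log (fun i => inv_pos.2 (sub_pos.2 (hu1 i))) ?_
  simpa [Real.log_inv, sub_eq_add_neg] using (Real.summable_log_one_add_of_summable hu.neg).neg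

lemma multipliable_eulerFactor {r : ℝ} (hr : 1 < r) (s : Set ℕ) :
    Multipliable fun k : s => (1 - (pr k : ℝ) ^ (-r))⁻¹ :=
  multipliable_inv_one_sub ((summable_pr_rpow_neg hr).subtype s)
    fun k => pr_rpow_neg_lt_one hr.le k

lemma tprod_Ioi_eq_mul_tprod_Ioi_succ {α : Type*} [CommMonoid α] [TopologicalSpace α]
    [ContinuousMul α] [T2Space α] {f : ℕ → α} (i : ℕ)
    (hf : Multipliable fun k : Set.Ioi (i + 1) => f k) :
    ∏' k : Set.Ioi i, f k = f (i + 1) * ∏' k : Set.Ioi (i + 1), f k := by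
  have hunion : Set.Ioi i = {i + 1} ∪ Set.Ioi (i + 1) := by
    ext k; simp only [Set.mem_Ioi, Set.mem_union, Set.mem_singleton_iff]; omega
  rw [hunion, Multipliable.tprod_union_disjoint (by simp)
    ((Set.finite_singleton _).multipliable f) hf, tprod_singleton]

lemma zetaTail_eq_mul {r : ℝ} (hr : 1 < r) (i : ℕ) :
    zetaTail r i = (1 - (pr (i + 1) : ℝ) ^ (-r))⁻¹ * zetaTail r (i + 1) :=
  tprod_Ioi_eq_mul_tprod_Ioi_succ (f := fun k => (1 - (pr k : ℝ) ^ (-r))⁻¹) i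
    (multipliable_eulerFactor hr _)

lemma one_le_zetaTail {r : ℝ} (hr : 1 < r) (i : ℕ) : 1 ≤ zetaTail r i := by
  refine ge_of_tendsto' (multipliable_eulerFactor hr (Set.Ioi i)).hasProd fun s =>
    Finset.one_le_prod fun k _ => ?_
  have h1 := pr_rpow_neg_lt_one hr.le k
  exact one_le_inv₀ (by linarith) |>.2 (by linarith [pr_rpow_neg_pos r k])

lemma one_add_le_inv_one_sub {w : ℝ} (hw : w < 1) : 1 + w ≤ (1 - w)⁻¹ := by
  have h : 0 < 1 - w := by linarith
  rw [← sub_nonneg, show (1 - w)⁻¹ - (1 + w) = w ^ 2 / (1 - w) by field_simp; ring]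
  positivity

lemma pr_rpow_neg_add_le_zetaTail_sub_one {r : ℝ} (hr : 1 < r) (j : ℕ) :
    (pr (j + 1) : ℝ) ^ (-r) + (pr (j + 2) : ℝ) ^ (-r) ≤ zetaTail r j - 1 := by
  set y := (pr (j + 1) : ℝ) ^ (-r)
  set z := (pr (j + 2) : ℝ) ^ (-r)
  have hy := pr_rpow_neg_pos r (j + 1)
  have hz := pr_rpow_neg_pos r (j + 2)
  have hζ : zetaTail r j = (1 - y)⁻¹ * ((1 - z)⁻¹ * zetaTail r (j + 2)) := by
    rw [zetaTail_eq_mul hr, zetaTail_eq_mul hr (j + 1)]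
  have h1 := one_add_le_inv_one_sub (pr_rpow_neg_lt_one hr.le (j + 1))
  have h2 := one_add_le_inv_one_sub (pr_rpow_neg_lt_one hr.le (j + 2))
  have h3 := one_le_zetaTail hr (j + 2)
  have : (1 + y) * ((1 + z) * 1) ≤ zetaTail r j := by
    have hy1 : 0 ≤ (1 - y)⁻¹ := by linarith
    have hz1 : 0 ≤ (1 - z)⁻¹ := by linarith
    rw [hζ]
    gcongr
  nlinarith

lemma nine_div_four_mul_three_rpow_neg_le {r : ℝ} (hr : 1 ≤ r) :
    9 / 4 * (3 : ℝ) ^ (-r) ≤ (2 : ℝ) ^ (-r) + (4 : ℝ) ^ (-r) := by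
  have h9 : (3 : ℝ) ^ (-r) * (3 : ℝ) ^ (-r) = (9 : ℝ) ^ (-r) := by
    rw [← mul_rpow (by norm_num) (by norm_num)]; norm_num
  have h8 : (2 : ℝ) ^ (-r) * (4 : ℝ) ^ (-r) = (8 : ℝ) ^ (-r) := by
    rw [← mul_rpow (by norm_num) (by norm_num)]; norm_num
  have h98 : 9 * (9 : ℝ) ^ (-r) ≤ 8 * (8 : ℝ) ^ (-r) :=
    mul_rpow_neg_le_mul_rpow_neg (by norm_num) (by norm_num) hr
  rw [← h9, ← h8] at h98
  set t := (3 : ℝ) ^ (-r)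
  set p := (2 : ℝ) ^ (-r)
  set q := (4 : ℝ) ^ (-r)
  have hp : 3 * t ≤ 2 * p := mul_rpow_neg_le_mul_rpow_neg (by norm_num) (by norm_num) hr
  have ht : 0 < t := by positivity
  -- `8p (p + q - 9t/4) ≥ 8p² - 18tp + 9t² = (2p - 3t)(4p - 3t) ≥ 0`,
  -- using `pq ≥ 9t²/8` and `2p ≥ 3t`
  nlinarith [mul_nonneg (by linarith : 0 ≤ 2 * p - 3 * t) (by linarith : 0 ≤ 4 * p - 3 * t)]

lemma three_rpow_neg_mul_lt_of_five_le {p q s r : ℝ} (hr : 1 ≤ r) (hp : 5 ≤ p) (hq : 0 < q)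
    (hqp : q < 2 * p) (hs : 0 < s) (hsp : s < 4 * p) :
    (3 : ℝ) ^ (-r) * p ^ (-r) < (q ^ (-r) + s ^ (-r)) * (1 - p ^ (-r) - (3 : ℝ) ^ (-r)) := by
  set t := (3 : ℝ) ^ (-r)
  set x := p ^ (-r)
  have ht : 3 * t ≤ 1 := by
    simpa using mul_rpow_neg_le_mul_rpow_neg one_pos (by norm_num : (1 : ℝ) ≤ 3) hr
  have hx : p * x ≤ 1 := by
    simpa using mul_rpow_neg_le_mul_rpow_neg one_pos (by linarith : (1 : ℝ) ≤ p) hr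
  have hp0 : 0 < p := by linarith
  have hy : (2 : ℝ) ^ (-r) * x < q ^ (-r) := by
    rw [← mul_rpow (by norm_num) hp0.le]
    exact rpow_lt_rpow_of_neg hq hqp (by linarith)
  have hz : (4 : ℝ) ^ (-r) * x < s ^ (-r) := by
    rw [← mul_rpow (by norm_num) hp0.le]
    exact rpow_lt_rpow_of_neg hs hsp (by linarith)
  have h24 := nine_div_four_mul_three_rpow_neg_le hr
  have hx0 : 0 < x := by positivity
  have ht0 : 0 < t := by positivity
  have hgap : 7 / 15 ≤ 1 - x - t := by nlinarith
  calc t * x < 21 / 20 * (t * x) := by nlinarith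
    _ ≤ (2 ^ (-r) + 4 ^ (-r)) * x * (7 / 15) := by nlinarith
    _ ≤ (q ^ (-r) + s ^ (-r)) * (1 - x - t) := by gcongr; linarith

lemma three_rpow_neg_mul_lt_three_five_seven {r : ℝ} (hr : 1 ≤ r) :
    (3 : ℝ) ^ (-r) * (3 : ℝ) ^ (-r) <
      ((5 : ℝ) ^ (-r) + (7 : ℝ) ^ (-r)) * (1 - (3 : ℝ) ^ (-r) - (3 : ℝ) ^ (-r)) := by
  set t := (3 : ℝ) ^ (-r)
  have ht : 3 * t ≤ 1 := by
    simpa using mul_rpow_neg_le_mul_rpow_neg one_pos (by norm_num : (1 : ℝ) ≤ 3) hr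
  have h9 : t * t = (9 : ℝ) ^ (-r) := by rw [← mul_rpow (by norm_num) (by norm_num)]; norm_num
  have h5 : 9 * (9 : ℝ) ^ (-r) ≤ 5 * (5 : ℝ) ^ (-r) :=
    mul_rpow_neg_le_mul_rpow_neg (by norm_num) (by norm_num) hr
  have h7 : 9 * (9 : ℝ) ^ (-r) ≤ 7 * (7 : ℝ) ^ (-r) :=
    mul_rpow_neg_le_mul_rpow_neg (by norm_num) (by norm_num) hr
  have h90 : 0 < (9 : ℝ) ^ (-r) := by positivity
  rw [h9]
  -- `5⁻ʳ + 7⁻ʳ ≥ (9/5 + 9/7) 9⁻ʳ = (108/35) 9⁻ʳ`, while `1 - 2·3⁻ʳ ≥ 1/3`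
  nlinarith

lemma three_rpow_neg_mul_pr_lt {r : ℝ} (hr : 1 ≤ r) {i : ℕ} (hi : 1 ≤ i) :
    (3 : ℝ) ^ (-r) * (pr (i + 1) : ℝ) ^ (-r) <
      ((pr (i + 2) : ℝ) ^ (-r) + (pr (i + 3) : ℝ) ^ (-r)) *
        (1 - (pr (i + 1) : ℝ) ^ (-r) - (3 : ℝ) ^ (-r)) := by
  obtain rfl | hi2 := hi.eq_or_lt
  · simpa [pr_two, pr_three, pr_four] using three_rpow_neg_mul_lt_three_five_seven hr
  have hp : 5 ≤ pr (i + 1) := pr_three ▸ pr_mono (by omega : 3 ≤ i + 1)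
  have hq : pr (i + 2) < 2 * pr (i + 1) := Nat.nth_prime_succ_lt_two_mul i
  have hs : pr (i + 3) < 2 * pr (i + 2) := Nat.nth_prime_succ_lt_two_mul (i + 1)
  have hpos : ∀ j, (0 : ℝ) < pr j := fun j => by exact_mod_cast (Nat.prime_nth_prime _).pos
  exact three_rpow_neg_mul_lt_of_five_le hr (by exact_mod_cast hp) (hpos _)
    (by exact_mod_cast hq) (hpos _) (by exact_mod_cast (by omega : pr (i + 3) < 4 * pr (i + 1)))

lemma mul_sub_one_lt_sub_one {t x A B : ℝ} (hx : x < 1) (hA : A = (1 - x)⁻¹ * B)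
    (h : t * x < (B - 1) * (1 - x - t)) : t * (A - 1) < B - 1 := by
  have h1x : 0 < 1 - x := by linarith
  have : A - 1 = (B - 1 + x) / (1 - x) := by rw [hA]; field_simp; ring
  rw [this, mul_div_assoc', div_lt_iff₀ h1x]
  linarith

/-- For real `r > 1` and every integer `i ≥ 1`, `ζ_{i+1}(r) − 1 > 3^{-r}(ζ_i(r) − 1)`. -/
theorem stmt11 (r : ℝ) (hr : 1 < r) (i : ℕ) (hi : 1 ≤ i) :
    (3 : ℝ) ^ (-r) * (zetaTail r i - 1) < zetaTail r (i + 1) - 1 := by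
  refine mul_sub_one_lt_sub_one (pr_rpow_neg_lt_one hr.le (i + 1)) (zetaTail_eq_mul hr i) ?_
  have key := three_rpow_neg_mul_pr_lt hr.le hi
  have htail := pr_rpow_neg_add_le_zetaTail_sub_one hr (i + 1)
  have hgap : 0 < 1 - (pr (i + 1) : ℝ) ^ (-r) - (3 : ℝ) ^ (-r) :=
    pos_of_mul_pos_right ((mul_pos (by positivity) (pr_rpow_neg_pos r _)).trans key)
      (add_pos (pr_rpow_neg_pos r _) (pr_rpow_neg_pos r _)).le
  exact key.trans_le (mul_le_mul_of_nonneg_right htail hgap.le)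
end

section
/- Let K/ℚ be a Galois extension of degree s. Then for every positive integer n, the number a_K(n) of nonzero integral ideals of 𝓞_K of absolute norm n is at most d_s(n), the number of s-tuples (n₁, …, n_s) of positive integers with n₁·n₂·⋯·n_s = n. -/
open NumberField

/-- `a_K(n)`: the number of nonzero integral ideals of `𝓞_K` of absolute norm `n`. -/
noncomputable def aK (K : Type*) [Field K] [NumberField K] (n : ℕ) : ℕ :=
  {I : Ideal (𝓞 K) | Ideal.absNorm I = n}.ncard

/-- `d_s(n)`: the number of `s`-tuples of positive integers whose product is `n`. -/
noncomputable def dcount (s n : ℕ) : ℕ :=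
  {t : Fin s → ℕ | (∀ i, 0 < t i) ∧ ∏ i, t i = n}.ncard

/-!
Every nonzero prime `P` of `S` (a Dedekind domain free of rank `d` over `ℤ`) has norm `p ^ f`
for a rational prime `p`, and at most `d` primes lie above a given `p`, since their product
divides `(p)`, whose norm is `p ^ d`. Number the primes above each `p` by `Fin d`, and send an
ideal `I` to the tuple whose `i`-th entry is the norm of the part of `I` supported on the primes
numbered `i`. The entries multiply to `N(I)`, and the map is injective: the exponent of `p` in the
`i`-th entry is `f` times the multiplicity in `I` of the unique prime above `p` numbered `i`.
-/

lemma Set.finite_setOf_prod_eq {ι : Type*} [Fintype ι] {n : ℕ} (hn : n ≠ 0) :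
    {t : ι → ℕ | ∏ i, t i = n}.Finite := by
  refine (Set.Finite.pi fun _ => Set.finite_Iic n).subset fun t ht i _ => ?_
  exact Nat.le_of_dvd (Nat.pos_of_ne_zero hn) (ht ▸ Finset.dvd_prod_of_mem t (Finset.mem_univ i))

open UniqueFactorizationMonoid

namespace Ideal

variable {S : Type*} [CommRing S] [IsDedekindDomain S] [Module.Free ℤ S]
variable {ι : Type*} [DecidableEq ι]

open scoped Classical in
noncomputable def partialNorms (idx : Ideal S → ι) (I : Ideal S) (i : ι) : ℕ :=
  ∏ P ∈ primeFactors I with idx P = i, absNorm P ^ (normalizedFactors I).count P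

open scoped Classical in
lemma prod_partialNorms [Fintype ι] (idx : Ideal S → ι) {I : Ideal S} (hI : I ≠ ⊥) :
    ∏ i, partialNorms idx I i = absNorm I := by
  unfold partialNorms
  rw [Finset.prod_fiberwise, ← toFinset_normalizedFactors, ← Finset.prod_multiset_map_count,
    ← map_multiset_prod, prod_normalizedFactors_eq_self hI]

variable [Module.Finite ℤ S]

lemma absNorm_pos_of_prime {P : Ideal S} (hP : Prime P) : 0 < absNorm P :=
  Nat.pos_of_ne_zero <| absNorm_eq_zero_iff.not.mpr hP.ne_zero

lemma exists_absNorm_eq_minFac_pow {P : Ideal S} (hP : Prime P) :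
    ∃ k, 0 < k ∧ absNorm P = (absNorm P).minFac ^ k ∧ (absNorm P).minFac.Prime ∧
      ((absNorm P).minFac : S) ∈ P := by
  have : P.IsMaximal := (isPrime_of_prime hP).isMaximal hP.ne_zero
  obtain ⟨p, k, hk, hpP, hp, hN⟩ := exists_prime_and_absNorm_eq_pow P
  rw [hN, hp.pow_minFac hk.ne']
  exact ⟨k, hk, rfl, hp, hpP⟩

lemma factorization_absNorm_of_ne_minFac {P : Ideal S} (hP : Prime P) {q : ℕ}
    (hq : q ≠ (absNorm P).minFac) : (absNorm P).factorization q = 0 := by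
  obtain ⟨k, -, hN, hp, -⟩ := exists_absNorm_eq_minFac_pow hP
  set p := (absNorm P).minFac
  rw [hN, hp.factorization_pow, Finsupp.single_eq_of_ne hq]

lemma factorization_absNorm_minFac_pos {P : Ideal S} (hP : Prime P) :
    0 < (absNorm P).factorization (absNorm P).minFac := by
  obtain ⟨k, hk, hN, hp, -⟩ := exists_absNorm_eq_minFac_pow hP
  set p := (absNorm P).minFac
  rwa [hN, hp.factorization_pow, Finsupp.single_eq_same]

-- For a prime `P`, `(absNorm P).minFac` is its residue characteristic.
variable (S) in
def primesAbove (p : ℕ) : Set (Ideal S) :=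
  {P | Prime P ∧ (absNorm P).minFac = p}

lemma card_le_finrank_of_subset_primesAbove {p : ℕ} {F : Finset (Ideal S)}
    (hF : ↑F ⊆ primesAbove S p) : F.card ≤ Module.finrank ℤ S := by
  rcases F.eq_empty_or_nonempty with rfl | ⟨P, hPF⟩
  · simp
  obtain ⟨hP, rfl⟩ := hF hPF
  obtain ⟨-, -, -, hp, -⟩ := exists_absNorm_eq_minFac_pow hP
  set p := (absNorm P).minFac
  have hdvd : ∏ Q ∈ F, Q ∣ span {(p : S)} := by
    refine Finset.prod_primes_dvd _ (fun Q hQ => (hF hQ).1) fun Q hQ => ?_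
    obtain ⟨hQ, hQp⟩ := hF hQ
    obtain ⟨-, -, -, -, hpQ⟩ := exists_absNorm_eq_minFac_pow hQ
    rwa [dvd_iff_le, span_singleton_le_iff_mem, ← hQp]
  have : p ^ F.card ∣ p ^ Module.finrank ℤ S :=
    calc p ^ F.card = ∏ _Q ∈ F, p := (Finset.prod_const p).symm
      _ ∣ ∏ Q ∈ F, absNorm Q :=
        Finset.prod_dvd_prod_of_dvd _ _ fun Q hQ => (hF hQ).2 ▸ Nat.minFac_dvd _
      _ = absNorm (∏ Q ∈ F, Q) := (map_prod absNorm _ _).symm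
      _ ∣ absNorm (span {(p : S)}) := map_dvd absNorm hdvd
      _ = p ^ Module.finrank ℤ S := absNorm_span_natCast p
  exact (Nat.pow_dvd_pow_iff_le_right hp.one_lt).mp this

lemma encard_primesAbove_le (p : ℕ) : (primesAbove S p).encard ≤ Module.finrank ℤ S := by
  by_contra! h
  obtain ⟨F, hFp, hF⟩ := Set.exists_subset_encard_eq (Order.add_one_le_of_lt h)
  have hFfin : F.Finite := Set.finite_of_encard_eq_coe hF
  have := card_le_finrank_of_subset_primesAbove (F := hFfin.toFinset) (by simpa using hFp)
  rw [hFfin.encard_eq_coe_toFinset_card] at hF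
  norm_cast at hF
  omega

lemma exists_injOn_primesAbove :
    ∃ idx : Ideal S → Fin (Module.finrank ℤ S), ∀ p, (primesAbove S p).InjOn idx := by
  have : NeZero (Module.finrank ℤ S) := ⟨Module.finrank_pos.ne'⟩
  have hle (p : ℕ) := encard_primesAbove_le (S := S) p
  choose f hf using fun p => (Set.finite_of_encard_le_coe (hle p)).exists_injOn_of_encard_le
    (t := (Set.univ : Set (Fin (Module.finrank ℤ S)))) (by simpa using hle p)
  refine ⟨fun P => f (absNorm P).minFac P, fun p P hP Q hQ hPQ => ?_⟩
  dsimp only at hPQ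
  rw [hP.2, hQ.2] at hPQ
  exact (hf p).2 hP hQ hPQ

lemma partialNorms_pos (idx : Ideal S → ι) (I : Ideal S) (i : ι) : 0 < partialNorms idx I i :=
  Finset.prod_pos fun P hP => pow_pos (absNorm_pos_of_prime
    (prime_of_normalized_factor P (mem_primeFactors.mp (Finset.mem_filter.mp hP).1))) _

open scoped Classical in
lemma factorization_partialNorms {idx : Ideal S → ι} (hidx : ∀ p, (primesAbove S p).InjOn idx)
    (I : Ideal S) {P : Ideal S} (hP : Prime P) :
    (partialNorms idx I (idx P)).factorization (absNorm P).minFac =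
      (normalizedFactors I).count P * (absNorm P).factorization (absNorm P).minFac := by
  have hfactor {Q} (hQ : Q ∈ primeFactors I) : Prime Q :=
    prime_of_normalized_factor Q (mem_primeFactors.mp hQ)
  rw [partialNorms, Nat.factorization_prod fun Q hQ => (pow_pos (absNorm_pos_of_prime
    (hfactor (Finset.mem_filter.mp hQ).1)) _).ne', Finsupp.finsetSum_apply,
    Finset.sum_eq_single P]
  · simp [Nat.factorization_pow]
  · intro Q hQ hQP
    obtain ⟨hQI, hidxQ⟩ := Finset.mem_filter.mp hQ
    rw [Nat.factorization_pow, Finsupp.smul_apply,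
      factorization_absNorm_of_ne_minFac (hfactor hQI), smul_zero]
    exact fun h => hQP (hidx _ ⟨hfactor hQI, h.symm⟩ ⟨hP, rfl⟩ hidxQ)
  · intro hPI
    simp [Multiset.count_eq_zero_of_notMem (by simpa [mem_primeFactors] using hPI)]

open scoped Classical in
lemma partialNorms_injOn {idx : Ideal S → ι} (hidx : ∀ p, (primesAbove S p).InjOn idx) :
    {I : Ideal S | I ≠ ⊥}.InjOn (partialNorms idx) := by
  intro I hI J hJ h
  have hfactors : normalizedFactors I = normalizedFactors J := by
    ext P
    by_cases hP : Prime P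
    · have hI' := factorization_partialNorms hidx I hP
      rw [h, factorization_partialNorms hidx J hP] at hI'
      exact (Nat.eq_of_mul_eq_mul_right (factorization_absNorm_minFac_pos hP) hI').symm
    · rw [Multiset.count_eq_zero_of_notMem fun h => hP (prime_of_normalized_factor P h),
        Multiset.count_eq_zero_of_notMem fun h => hP (prime_of_normalized_factor P h)]
  rw [← prod_normalizedFactors_eq_self hI, hfactors, prod_normalizedFactors_eq_self hJ]

theorem ncard_setOf_absNorm_eq_le_dcount {n : ℕ} (hn : 0 < n) :
    {I : Ideal S | absNorm I = n}.ncard ≤ dcount (Module.finrank ℤ S) n := by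
  obtain ⟨idx, hidx⟩ := exists_injOn_primesAbove (S := S)
  have hne : {I : Ideal S | absNorm I = n} ⊆ {I | I ≠ ⊥} := by
    rintro I hI rfl
    simp only [Set.mem_ofPred_eq, absNorm_bot] at hI
    omega
  refine Set.ncard_le_ncard_of_injOn (partialNorms idx)
    (fun I hI => ⟨partialNorms_pos idx I, (prod_partialNorms idx (hne hI)).trans hI⟩)
    ((partialNorms_injOn hidx).mono hne)
    ((Set.finite_setOf_prod_eq hn.ne').subset fun t ht => ht.2)

end Ideal

theorem stmt13_general (K : Type*) [Field K] [NumberField K]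
    (s : ℕ) (hs : Module.finrank ℚ K = s) (n : ℕ) (hn : 0 < n) :
    aK K n ≤ dcount s n := by
  rw [← hs, ← RingOfIntegers.rank]
  exact Ideal.ncard_setOf_absNorm_eq_le_dcount hn

/-- For a degree-`s` Galois extension `K/ℚ` and every positive integer `n`,
`a_K(n) ≤ d_s(n)`. -/
theorem stmt13 (K : Type*) [Field K] [NumberField K] [IsGalois ℚ K]
    (s : ℕ) (hs : Module.finrank ℚ K = s) (n : ℕ) (hn : 0 < n) :
    aK K n ≤ dcount s n :=
  stmt13_general K s hs n hn
end

section
/- Let K be a number field, let ε > 0 and η > 0 be real numbers such that a_K(n) ≤ η·n^ε for every positive integer n, and let r > ε + 1 be real. Then for every integer d with 2 ≤ d ≤ ((r − ε − 1)/η)^{1/(1+ε)}, one has ∑_{n > d} a_K(n)·n^{-r} < d^{-r}. -/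
open NumberField

/-- Key pointwise inequality from the mean value theorem. -/
lemma key_ineq (s : ℝ) (hs : 1 < s) (a : ℝ) (ha : 1 ≤ a) :
    (a + 1) ^ (-s) < (a ^ (1 - s) - (a + 1) ^ (1 - s)) / (s - 1) := by
  have ha0 : (0:ℝ) < a := by linarith
  have hlt : a < a + 1 := by linarith
  obtain ⟨c, hc, hderiv⟩ := exists_hasDerivAt_eq_slope (fun x : ℝ => x ^ (1 - s))
      (fun x : ℝ => (1 - s) * x ^ (1 - s - 1)) hlt
      (by
        apply ContinuousOn.rpow_const continuousOn_id
        intro x hx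
        exact Or.inl (by simp only [id]; nlinarith [hx.1]))
      (fun x hx => Real.hasDerivAt_rpow_const (Or.inl (by nlinarith [hx.1])))
  have hc0 : 0 < c := lt_trans ha0 hc.1
  have hcex : (1 - s) * c ^ (1 - s - 1) = (a + 1) ^ (1 - s) - a ^ (1 - s) := by
    rw [hderiv]; ring_nf
  have hex : (1 - s - 1) = -s := by ring
  rw [hex] at hcex
  have h1 : a ^ (1 - s) - (a + 1) ^ (1 - s) = (s - 1) * c ^ (-s) := by nlinarith [hcex]
  rw [h1, lt_div_iff₀ (by linarith : (0:ℝ) < s - 1)]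
  have h2 : (a + 1) ^ (-s) < c ^ (-s) :=
    Real.rpow_lt_rpow_of_neg hc0 hc.2 (by linarith)
  nlinarith [h2]

/-- Shift equivalence `ℕ ≃ {n // m < n}`. -/
def shiftEquiv' (m : ℕ) : ℕ ≃ {n : ℕ // m < n} where
  toFun k := ⟨m + 1 + k, by omega⟩
  invFun n := (n : ℕ) - (m + 1)
  left_inv k := by show m + 1 + k - (m + 1) = k; omega
  right_inv n := Subtype.ext (by have := n.2; simp only; omega)

/-- The telescoping sum. -/
lemma telescope_hasSum (s : ℝ) (hs : 1 < s) (m : ℕ) (hm : 1 ≤ m) :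
    HasSum (fun k : ℕ => ((((m:ℝ) + k) ^ (1 - s) - ((m:ℝ) + k + 1) ^ (1 - s)) / (s - 1)))
      ((m:ℝ) ^ (1 - s) / (s - 1)) := by
  have hm1 : (1:ℝ) ≤ (m:ℝ) := by exact_mod_cast hm
  have hbpos : ∀ k : ℕ, (0:ℝ) < (m:ℝ) + k := fun k => by
    have h1 : (0:ℝ) ≤ (k:ℝ) := Nat.cast_nonneg k
    linarith
  have hfun : (fun k : ℕ => ((m:ℝ) + k) ^ (1 - s) - ((m:ℝ) + (k + 1 : ℕ)) ^ (1 - s))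
      = (fun k : ℕ => ((m:ℝ) + k) ^ (1 - s) - ((m:ℝ) + k + 1) ^ (1 - s)) := by
    funext k; push_cast; ring_nf
  have hFanti : ∀ k : ℕ, 0 ≤ ((m:ℝ) + k) ^ (1 - s) - ((m:ℝ) + (k + 1 : ℕ)) ^ (1 - s) := by
    intro k
    have h1 : ((m:ℝ) + ((k:ℕ) + 1 : ℕ)) ^ (1 - s) ≤ ((m:ℝ) + k) ^ (1 - s) := by
      rw [Real.rpow_le_rpow_iff_of_neg (by push_cast; linarith [hbpos k]) (hbpos k)
        (by linarith)]
      push_cast; linarith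
    linarith
  have hFtend : Filter.Tendsto (fun k : ℕ => ((m:ℝ) + k) ^ (1 - s)) Filter.atTop (nhds 0) := by
    have h1 : Filter.Tendsto (fun k : ℕ => (m:ℝ) + k) Filter.atTop Filter.atTop :=
      Filter.tendsto_atTop_add_const_left _ _ tendsto_natCast_atTop_atTop
    have h2 := (tendsto_rpow_neg_atTop (by linarith : (0:ℝ) < s - 1)).comp h1
    have hex : -(s - 1) = 1 - s := by ring
    rw [hex] at h2
    exact h2
  have h0 : HasSum (fun k : ℕ => ((m:ℝ) + k) ^ (1 - s) - ((m:ℝ) + (k + 1 : ℕ)) ^ (1 - s))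
      ((m:ℝ) ^ (1 - s)) := by
    rw [hasSum_iff_tendsto_nat_of_nonneg hFanti]
    have hps : ∀ n : ℕ, ∑ i ∈ Finset.range n,
        (((m:ℝ) + i) ^ (1 - s) - ((m:ℝ) + (i + 1 : ℕ)) ^ (1 - s))
        = ((m:ℝ) + (0:ℕ)) ^ (1 - s) - ((m:ℝ) + n) ^ (1 - s) :=
      fun n => Finset.sum_range_sub' (fun k : ℕ => ((m:ℝ) + k) ^ (1 - s)) n
    simp_rw [hps]
    have := Filter.Tendsto.sub
      (tendsto_const_nhds : Filter.Tendsto (fun _ : ℕ => ((m:ℝ) + (0:ℕ)) ^ (1 - s))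
        Filter.atTop (nhds (((m:ℝ) + (0:ℕ)) ^ (1 - s)))) hFtend
    simpa using this
  rw [hfun] at h0
  exact h0.div_const (s - 1)

/-- Strict tail bound for the `p`-series. -/
lemma tail_lt (s : ℝ) (hs : 1 < s) (m : ℕ) (hm : 1 ≤ m) :
    ∑' n : {n : ℕ // m < n}, ((n : ℕ) : ℝ) ^ (-s) < (m:ℝ) ^ (1 - s) / (s - 1) := by
  rw [← (shiftEquiv' m).tsum_eq]
  have hm1 : (1:ℝ) ≤ (m:ℝ) := by exact_mod_cast hm
  have hgsum := telescope_hasSum s hs m hm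
  have hterm : ∀ k : ℕ, (((shiftEquiv' m k : ℕ)) : ℝ) ^ (-s)
      < (((m:ℝ) + k) ^ (1 - s) - ((m:ℝ) + k + 1) ^ (1 - s)) / (s - 1) := by
    intro k
    have ha1 : (1:ℝ) ≤ (m:ℝ) + k := by
      have : (0:ℝ) ≤ (k:ℝ) := Nat.cast_nonneg k
      linarith
    have h := key_ineq s hs ((m:ℝ) + k) ha1
    have e1 : (((shiftEquiv' m k : ℕ)) : ℝ) = (m:ℝ) + k + 1 := by
      show ((m + 1 + k : ℕ) : ℝ) = (m:ℝ) + k + 1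
      push_cast; ring
    rw [e1]
    exact h
  have hnn : ∀ k : ℕ, 0 ≤ (((shiftEquiv' m k : ℕ)) : ℝ) ^ (-s) :=
    fun k => Real.rpow_nonneg (Nat.cast_nonneg _) _
  calc ∑' k : ℕ, (((shiftEquiv' m k : ℕ)) : ℝ) ^ (-s)
      < ∑' k : ℕ, (((m:ℝ) + k) ^ (1 - s) - ((m:ℝ) + k + 1) ^ (1 - s)) / (s - 1) :=
        Summable.tsum_lt_tsum_of_nonneg hnn (fun k => (hterm k).le) (hterm 0) hgsum.summable
    _ = (m:ℝ) ^ (1 - s) / (s - 1) := hgsum.tsum_eq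

/-- If `a_K(n) ≤ η n^ε` for all `n ≥ 1` and `r > ε + 1`, then for every integer
`2 ≤ d ≤ ((r − ε − 1)/η)^{1/(1+ε)}` one has `∑_{n > d} a_K(n) n^{-r} < d^{-r}`. -/
theorem stmt15 (K : Type*) [Field K] [NumberField K]
    (ε η : ℝ) (hε : 0 < ε) (hη : 0 < η)
    (ha : ∀ n : ℕ, 0 < n → (aK K n : ℝ) ≤ η * (n : ℝ) ^ ε)
    (r : ℝ) (hr : ε + 1 < r)
    (d : ℕ) (hd2 : 2 ≤ d) (hdle : (d : ℝ) ≤ ((r - ε - 1) / η) ^ (1 / (1 + ε))) :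
    ∑' n : {n : ℕ // d < n}, (aK K (n : ℕ) : ℝ) * ((n : ℕ) : ℝ) ^ (-r)
      < (d : ℝ) ^ (-r) := by
  have hd0 : (0:ℝ) < (d:ℝ) := by exact_mod_cast (by omega : 0 < d)
  have hs : 1 < r - ε := by linarith
  have hfg : ∀ n : {n : ℕ // d < n},
      (aK K (n:ℕ) : ℝ) * ((n:ℕ):ℝ) ^ (-r) ≤ η * ((n:ℕ):ℝ) ^ (-(r - ε)) := by
    intro n
    have hn0 : 0 < (n:ℕ) := by have := n.2; omega
    have hx : (0:ℝ) < ((n:ℕ):ℝ) := by exact_mod_cast hn0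
    have h2 : ((n:ℕ):ℝ) ^ ε * ((n:ℕ):ℝ) ^ (-r) = ((n:ℕ):ℝ) ^ (-(r - ε)) := by
      rw [← Real.rpow_add hx]; ring_nf
    calc (aK K (n:ℕ) : ℝ) * ((n:ℕ):ℝ) ^ (-r)
        ≤ (η * ((n:ℕ):ℝ) ^ ε) * ((n:ℕ):ℝ) ^ (-r) :=
          mul_le_mul_of_nonneg_right (ha (n:ℕ) hn0) (Real.rpow_nonneg hx.le _)
      _ = η * (((n:ℕ):ℝ) ^ ε * ((n:ℕ):ℝ) ^ (-r)) := by ring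
      _ = η * ((n:ℕ):ℝ) ^ (-(r - ε)) := by rw [h2]
  have hgsum : Summable (fun n : {n : ℕ // d < n} => η * ((n:ℕ):ℝ) ^ (-(r - ε))) := by
    have h1 : Summable (fun n : ℕ => (n:ℝ) ^ (-(r - ε))) :=
      Real.summable_nat_rpow.mpr (by linarith)
    exact (h1.mul_left η).subtype _
  have hnn : ∀ n : {n : ℕ // d < n}, 0 ≤ (aK K (n:ℕ) : ℝ) * ((n:ℕ):ℝ) ^ (-r) :=
    fun n => mul_nonneg (Nat.cast_nonneg _) (Real.rpow_nonneg (Nat.cast_nonneg _) _)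
  have hfsum : Summable (fun n : {n : ℕ // d < n} => (aK K (n:ℕ) : ℝ) * ((n:ℕ):ℝ) ^ (-r)) :=
    Summable.of_nonneg_of_le hnn hfg hgsum
  have htail := tail_lt (r - ε) hs d (by omega)
  -- the final numeric bound
  have hbase : (0:ℝ) ≤ (r - ε - 1) / η := div_nonneg (by linarith) hη.le
  have h2 : (((r - ε - 1) / η) ^ (1/(1+ε))) ^ (1+ε) = (r - ε - 1) / η := by
    rw [← Real.rpow_mul hbase, one_div,
      inv_mul_cancel₀ (by linarith : (1:ℝ)+ε ≠ 0), Real.rpow_one]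
  have hpow : (d:ℝ) ^ (1+ε) ≤ (r - ε - 1) / η := by
    calc (d:ℝ) ^ (1+ε) ≤ (((r - ε - 1) / η) ^ (1/(1+ε))) ^ (1+ε) :=
          Real.rpow_le_rpow hd0.le hdle (by linarith)
      _ = (r - ε - 1) / η := h2
  have hη2 : η * (d:ℝ) ^ (1+ε) ≤ r - ε - 1 := by
    have := mul_le_mul_of_nonneg_left hpow hη.le
    rwa [mul_div_cancel₀ _ (ne_of_gt hη)] at this
  have hfinal : η * ((d:ℝ) ^ (1 - (r - ε)) / (r - ε - 1)) ≤ (d:ℝ) ^ (-r) := by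
    have hd1 : (d:ℝ) ^ (1 - (r - ε)) = (d:ℝ) ^ (1+ε) * (d:ℝ) ^ (-r) := by
      rw [← Real.rpow_add hd0]; ring_nf
    rw [hd1]
    calc η * ((d:ℝ) ^ (1+ε) * (d:ℝ) ^ (-r) / (r - ε - 1))
        = (η * (d:ℝ) ^ (1+ε) / (r - ε - 1)) * (d:ℝ) ^ (-r) := by ring
      _ ≤ 1 * (d:ℝ) ^ (-r) := by
          apply mul_le_mul_of_nonneg_right _ (Real.rpow_nonneg hd0.le _)
          rw [div_le_one (by linarith : (0:ℝ) < r - ε - 1)]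
          exact hη2
      _ = (d:ℝ) ^ (-r) := one_mul _
  calc ∑' n : {n : ℕ // d < n}, (aK K (n : ℕ) : ℝ) * ((n : ℕ) : ℝ) ^ (-r)
      ≤ ∑' n : {n : ℕ // d < n}, η * ((n:ℕ):ℝ) ^ (-(r - ε)) :=
        Summable.tsum_le_tsum hfg hfsum hgsum
    _ = η * ∑' n : {n : ℕ // d < n}, ((n:ℕ):ℝ) ^ (-(r - ε)) := tsum_mul_left
    _ < η * ((d:ℝ) ^ (1 - (r - ε)) / (r - ε - 1)) := by
        exact mul_lt_mul_of_pos_left htail hη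
    _ ≤ (d:ℝ) ^ (-r) := hfinal
end

section
/- Fix a real number r > 1, an integer s ≥ 2, and an integer M ≥ 1. There exists a sequence of rational primes p₁ < p₂ < ⋯ < p_M satisfying: (1a) p₁ > max(2, s)^s; (1b) −log(1 − x) ≤ 2x for x = p₁^{-r}; (1c) log(1 + x) ≥ x/2 for x = p₁^{-r}; (2) p_i^{1/s} > p_{i−1} for each 2 ≤ i ≤ M; (3) for all 1 ≤ j < i ≤ M, s · ∑_{q prime, p_i^{1/s} < q ≤ p_i} q^{-r} < (1/(12M)) · p_j^{-r}; and (4) for each 1 ≤ i ≤ M, ∑_{q prime, q > p_i} q^{-s r} < (1/12) · p_i^{-r}. -/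
open Real Filter

private lemma aux_threshold (ε : ℝ) (hε : 0 < ε) (D : ℝ) :
    ∃ N : ℕ, ∀ n : ℕ, N ≤ n → D < (n : ℝ) ^ ε := by
  have h : Tendsto (fun n : ℕ => ((n : ℝ)) ^ ε) atTop atTop :=
    (tendsto_rpow_atTop hε).comp tendsto_natCast_atTop_atTop
  have h2 := h.eventually_gt_atTop D
  rw [eventually_atTop] at h2
  obtain ⟨N, hN⟩ := h2
  exact ⟨N, fun n hn => hN n hn⟩

private lemma aux_tail (a b c : ℝ) (ha : 1 < a) (hb : 0 ≤ b) (hc : a + b = c)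
    (T : ℝ) (hT : 1 ≤ T) (P : ℕ → Prop)
    (hP : ∀ q : ℕ, q.Prime → P q → T < (q : ℝ)) :
    ∑' q : {q : ℕ // q.Prime ∧ P q}, ((q : ℕ) : ℝ) ^ (-c)
      ≤ T ^ (-b) * ∑' q : Nat.Primes, (q : ℝ) ^ (-a) := by
  have hT0 : 0 < T := lt_of_lt_of_le one_pos hT
  have hsa : Summable (fun q : Nat.Primes => (q : ℝ) ^ (-a)) :=
    Nat.Primes.summable_rpow.mpr (by linarith)
  have hsc : Summable (fun q : Nat.Primes => (q : ℝ) ^ (-c)) :=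
    Nat.Primes.summable_rpow.mpr (by linarith)
  have he : Function.Injective
      (fun q : {q : ℕ // q.Prime ∧ P q} => (⟨q.1, q.2.1⟩ : Nat.Primes)) := by
    intro x y h
    simpa [Subtype.ext_iff] using h
  have hsn : Summable (fun n : ℕ => (n : ℝ) ^ (-c)) :=
    Real.summable_nat_rpow.mpr (by linarith)
  have hsum_f : Summable (fun q : {q : ℕ // q.Prime ∧ P q} => ((q : ℕ) : ℝ) ^ (-c)) :=
    hsn.comp_injective Subtype.coe_injective
  have hsum_g : Summable (fun q : Nat.Primes => T ^ (-b) * (q : ℝ) ^ (-a)) :=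
    hsa.mul_left _
  have key : ∀ q : {q : ℕ // q.Prime ∧ P q},
      ((q : ℕ) : ℝ) ^ (-c) ≤ T ^ (-b) * (((⟨q.1, q.2.1⟩ : Nat.Primes) : ℕ) : ℝ) ^ (-a) := by
    intro q
    have hq2 : (2 : ℝ) ≤ ((q : ℕ) : ℝ) := by exact_mod_cast q.2.1.two_le
    have hq0 : (0 : ℝ) < ((q : ℕ) : ℝ) := by linarith
    have hTq : T < ((q : ℕ) : ℝ) := hP q q.2.1 q.2.2
    have h1 : ((q : ℕ) : ℝ) ^ (-c) = ((q : ℕ) : ℝ) ^ (-b) * ((q : ℕ) : ℝ) ^ (-a) := by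
      rw [← Real.rpow_add hq0]; congr 1; linarith
    have h2 : ((q : ℕ) : ℝ) ^ (-b) ≤ T ^ (-b) :=
      Real.rpow_le_rpow_of_nonpos hT0 hTq.le (by linarith)
    rw [h1]
    exact mul_le_mul_of_nonneg_right h2 (Real.rpow_nonneg hq0.le _)
  calc ∑' q : {q : ℕ // q.Prime ∧ P q}, ((q : ℕ) : ℝ) ^ (-c)
      ≤ ∑' q : Nat.Primes, T ^ (-b) * (q : ℝ) ^ (-a) :=
        Summable.tsum_le_tsum_of_inj _ he (fun q _ => by positivity) key hsum_f hsum_g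
    _ = T ^ (-b) * ∑' q : Nat.Primes, (q : ℝ) ^ (-a) := tsum_mul_left

private lemma aux_log (x : ℝ) (hx0 : 0 < x) (hx : x ≤ 1/2) :
    -Real.log (1 - x) ≤ 2 * x ∧ x / 2 ≤ Real.log (1 + x) := by
  have h1 : 0 < 1 - x := by linarith
  have h2 : 0 < 1 + x := by linarith
  constructor
  · have h3 := Real.log_le_sub_one_of_pos (inv_pos.mpr h1)
    rw [Real.log_inv] at h3
    have h4 : (1 - x)⁻¹ ≤ 1 + 2 * x := by
      rw [inv_eq_one_div, div_le_iff₀ h1]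
      nlinarith
    linarith
  · have h3 := Real.log_le_sub_one_of_pos (inv_pos.mpr h2)
    rw [Real.log_inv] at h3
    have h4 : (1 + x)⁻¹ ≤ 1 - x / 2 := by
      rw [inv_eq_one_div, div_le_iff₀ h2]
      nlinarith
    linarith

set_option maxHeartbeats 2000000 in
/-- For fixed real `r > 1`, integer `s ≥ 2` and integer `M ≥ 1`, there is a sequence of primes
`p₁ < p₂ < ⋯ < p_M` satisfying conditions (1a)–(1c), (2), (3), (4) of Lemma 7.3. -/
theorem stmt18 (r : ℝ) (hr : 1 < r) (s : ℕ) (hs : 2 ≤ s) (M : ℕ) (hM : 0 < M) :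
    ∃ p : Fin M → ℕ,
      (∀ i, (p i).Prime) ∧ StrictMono p ∧
      -- (1a)
      (max 2 s) ^ s < p ⟨0, hM⟩ ∧
      -- (1b)
      (-Real.log (1 - (p ⟨0, hM⟩ : ℝ) ^ (-r)) ≤ 2 * (p ⟨0, hM⟩ : ℝ) ^ (-r)) ∧
      -- (1c)
      ((p ⟨0, hM⟩ : ℝ) ^ (-r) / 2 ≤ Real.log (1 + (p ⟨0, hM⟩ : ℝ) ^ (-r))) ∧
      -- (2)
      (∀ i j : Fin M, (j : ℕ) + 1 = (i : ℕ) →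
        (p j : ℝ) < (p i : ℝ) ^ (((s : ℝ))⁻¹)) ∧
      -- (3)
      (∀ i j : Fin M, j < i →
        (s : ℝ) * ∑' q : {q : ℕ // q.Prime ∧ (p i : ℝ) ^ (((s : ℝ))⁻¹) < (q : ℝ)
            ∧ (q : ℕ) ≤ p i}, ((q : ℕ) : ℝ) ^ (-r)
          < (1 / (12 * (M : ℝ))) * (p j : ℝ) ^ (-r)) ∧
      -- (4)
      (∀ i : Fin M,
        ∑' q : {q : ℕ // q.Prime ∧ p i < (q : ℕ)}, ((q : ℕ) : ℝ) ^ (-((s : ℝ) * r))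
          < (1 / 12) * (p i : ℝ) ^ (-r)) := by
  have h2s : (2 : ℝ) ≤ (s : ℝ) := by exact_mod_cast hs
  have hM1 : (1 : ℝ) ≤ (M : ℝ) := by exact_mod_cast hM
  have hs0 : (0 : ℝ) < (s : ℝ) := by linarith
  -- constants
  set a₀ : ℝ := (1 + r) / 2 with ha₀_def
  set b₀ : ℝ := (r - 1) / 2 with hb₀_def
  set a₁ : ℝ := (1 + ((s : ℝ) * r - r)) / 2 with ha₁_def
  set b₁ : ℝ := ((s : ℝ) * r + r - 1) / 2 with hb₁_def
  have hrs : 1 < (s : ℝ) * r - r := by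
    nlinarith [mul_nonneg (by linarith : (0:ℝ) ≤ (s : ℝ) - 2) (by linarith : (0:ℝ) ≤ r - 1)]
  have ha₀ : 1 < a₀ := by rw [ha₀_def]; linarith
  have hb₀ : 0 < b₀ := by rw [hb₀_def]; linarith
  have ha₁ : 1 < a₁ := by rw [ha₁_def]; linarith
  have hb₁ : r < b₁ := by rw [hb₁_def]; linarith
  have hab₀ : a₀ + b₀ = r := by rw [ha₀_def, hb₀_def]; ring
  have hab₁ : a₁ + b₁ = (s : ℝ) * r := by rw [ha₁_def, hb₁_def]; ring
  set C₀ : ℝ := ∑' q : Nat.Primes, (q : ℝ) ^ (-a₀) with hC₀_def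
  set C₁ : ℝ := ∑' q : Nat.Primes, (q : ℝ) ^ (-a₁) with hC₁_def
  have hC₀ : 0 ≤ C₀ := tsum_nonneg fun q => Real.rpow_nonneg (by positivity) _
  have hC₁ : 0 ≤ C₁ := tsum_nonneg fun q => Real.rpow_nonneg (by positivity) _
  obtain ⟨N₁, hN₁⟩ := aux_threshold (b₁ - r) (by linarith) (12 * (C₁ + 1))
  -- the basic step
  have step : ∀ prev : ℕ, ∃ p : ℕ, p.Prime ∧ prev ^ s < p ∧ (max 2 s) ^ s < p ∧
      12 * (C₁ + 1) < (p : ℝ) ^ (b₁ - r) ∧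
      12 * (M : ℝ) * (s : ℝ) * (C₀ + 1) * (prev : ℝ) ^ r
        < (p : ℝ) ^ (b₀ * ((s : ℝ))⁻¹) := by
    intro prev
    obtain ⟨N₂, hN₂⟩ := aux_threshold (b₀ * ((s : ℝ))⁻¹) (by positivity)
      (12 * (M : ℝ) * (s : ℝ) * (C₀ + 1) * (prev : ℝ) ^ r)
    obtain ⟨p, hpK, hp⟩ := Nat.exists_infinite_primes
      (max (max (prev ^ s + 1) ((max 2 s) ^ s + 1)) (max N₁ N₂))
    refine ⟨p, hp, ?_, ?_, ?_, ?_⟩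
    · have := le_trans (le_max_left _ _) (le_trans (le_max_left _ _) hpK); omega
    · have := le_trans (le_max_right _ _) (le_trans (le_max_left _ _) hpK); omega
    · exact hN₁ p (le_trans (le_trans (le_max_left _ _) (le_max_right _ _)) hpK)
    · exact hN₂ p (le_trans (le_trans (le_max_right _ _) (le_max_right _ _)) hpK)
  choose g hg1 hg2 hg3 hg4 hg5 using step
  set f : ℕ → ℕ := fun n => Nat.rec (g 1) (fun _ prev => g prev) n with hf_def
  have hfs : ∀ n, f (n + 1) = g (f n) := fun n => rfl
  have hprime : ∀ n, (f n).Prime := by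
    intro n
    cases n with
    | zero => exact hg1 1
    | succ m => exact hg1 (f m)
  have h1a : (max 2 s) ^ s < f 0 := hg3 1
  have h4q : ∀ n, 12 * (C₁ + 1) < ((f n : ℕ) : ℝ) ^ (b₁ - r) := by
    intro n
    cases n with
    | zero => exact hg4 1
    | succ m => exact hg4 (f m)
  have h3q : ∀ n, 12 * (M : ℝ) * (s : ℝ) * (C₀ + 1) * ((f n : ℕ) : ℝ) ^ r
      < ((f (n + 1) : ℕ) : ℝ) ^ (b₀ * ((s : ℝ))⁻¹) := fun n => hg5 (f n)
  have hpow : ∀ n, f n ^ s < f (n + 1) := fun n => hg2 (f n)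
  have hf2 : ∀ n, 2 ≤ f n := fun n => (hprime n).two_le
  have hlt : ∀ n, f n < f (n + 1) := by
    intro n
    have h1 : f n ≤ f n ^ s := Nat.le_self_pow (by omega) _
    have := hpow n
    omega
  have hfmono : StrictMono f := strictMono_nat_of_lt_succ hlt
  -- key facts in ℝ
  have hfR : ∀ n, (2 : ℝ) ≤ ((f n : ℕ) : ℝ) := fun n => by exact_mod_cast hf2 n
  have hfpos : ∀ n, (0 : ℝ) < ((f n : ℕ) : ℝ) := fun n => by linarith [hfR n]
  refine ⟨fun i => f i, fun i => hprime i, fun i j h => hfmono (by exact_mod_cast h),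
    h1a, ?_, ?_, ?_, ?_, ?_⟩
  -- (1b), (1c)
  · -- x ≤ 1/2
    have hx0 : (0 : ℝ) < ((f 0 : ℕ) : ℝ) ^ (-r) := Real.rpow_pos_of_pos (hfpos 0) _
    have hx : ((f 0 : ℕ) : ℝ) ^ (-r) ≤ 1 / 2 := by
      calc ((f 0 : ℕ) : ℝ) ^ (-r) ≤ (2 : ℝ) ^ (-r) :=
            Real.rpow_le_rpow_of_nonpos two_pos (hfR 0) (by linarith)
        _ ≤ (2 : ℝ) ^ (-1 : ℝ) :=
            Real.rpow_le_rpow_of_exponent_le one_le_two (by linarith)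
        _ = 1 / 2 := by rw [Real.rpow_neg_one]; norm_num
    exact (aux_log _ hx0 hx).1
  · have hx0 : (0 : ℝ) < ((f 0 : ℕ) : ℝ) ^ (-r) := Real.rpow_pos_of_pos (hfpos 0) _
    have hx : ((f 0 : ℕ) : ℝ) ^ (-r) ≤ 1 / 2 := by
      calc ((f 0 : ℕ) : ℝ) ^ (-r) ≤ (2 : ℝ) ^ (-r) :=
            Real.rpow_le_rpow_of_nonpos two_pos (hfR 0) (by linarith)
        _ ≤ (2 : ℝ) ^ (-1 : ℝ) :=
            Real.rpow_le_rpow_of_exponent_le one_le_two (by linarith)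
        _ = 1 / 2 := by rw [Real.rpow_neg_one]; norm_num
    exact (aux_log _ hx0 hx).2
  -- (2)
  · intro i j hji
    have h := hpow (j : ℕ)
    rw [hji] at h
    have hcast : ((f j : ℕ) : ℝ) ^ (s : ℕ) < ((f i : ℕ) : ℝ) := by exact_mod_cast h
    calc ((f j : ℕ) : ℝ) = (((f j : ℕ) : ℝ) ^ (s : ℕ)) ^ ((s : ℝ))⁻¹ := by
          rw [← Real.rpow_natCast ((f (j : ℕ) : ℕ) : ℝ) s, ← Real.rpow_mul (hfpos _).le,
            mul_inv_cancel₀ (by positivity), Real.rpow_one]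
      _ < ((f i : ℕ) : ℝ) ^ ((s : ℝ))⁻¹ :=
          Real.rpow_lt_rpow (by positivity) hcast (by positivity)
  -- (3)
  · intro i j hji
    have hipos : 0 < (i : ℕ) := lt_of_le_of_lt (Nat.zero_le _) hji
    obtain ⟨n, hn⟩ : ∃ n, (i : ℕ) = n + 1 := ⟨(i : ℕ) - 1, by omega⟩
    have hjn : (j : ℕ) ≤ n := by omega
    set T : ℝ := ((f (i : ℕ) : ℕ) : ℝ) ^ ((s : ℝ))⁻¹ with hT_def
    have hT1 : 1 ≤ T := Real.one_le_rpow (by linarith [hfR (i : ℕ)]) (by positivity)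
    have htail := aux_tail a₀ b₀ r ha₀ hb₀.le hab₀ T hT1
      (fun q => T < (q : ℝ) ∧ q ≤ f (i : ℕ)) (fun q _ hq => hq.1)
    -- rewrite T ^ (-b₀)
    set X : ℝ := ((f (i : ℕ) : ℕ) : ℝ) ^ (b₀ * ((s : ℝ))⁻¹) with hX_def
    have hXpos : 0 < X := Real.rpow_pos_of_pos (hfpos _) _
    have hTX : T ^ (-b₀) = X⁻¹ := by
      rw [hT_def, hX_def, ← Real.rpow_mul (hfpos _).le, ← Real.rpow_neg (hfpos _).le]
      congr 1; ring
    rw [hTX] at htail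
    -- the quantitative bound
    have h5 := h3q n
    rw [← hn] at h5
    have hYle : ((f (j : ℕ) : ℕ) : ℝ) ^ r ≤ ((f n : ℕ) : ℝ) ^ r :=
      Real.rpow_le_rpow (hfpos _).le (by exact_mod_cast (hfmono.monotone hjn)) (by linarith)
    set Y : ℝ := ((f (j : ℕ) : ℕ) : ℝ) ^ r with hY_def
    have hYpos : 0 < Y := Real.rpow_pos_of_pos (hfpos _) _
    have hkey : 12 * (M : ℝ) * (s : ℝ) * (C₀ + 1) * Y < X := lt_of_le_of_lt
      (mul_le_mul_of_nonneg_left hYle (by positivity)) h5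
    have hgoal : (s : ℝ) * (X⁻¹ * C₀) < 1 / (12 * (M : ℝ)) * Y⁻¹ := by
      have e1 : (s : ℝ) * (X⁻¹ * C₀) = ((s : ℝ) * C₀) / X := by
        rw [div_eq_mul_inv]; ring
      have e2 : 1 / (12 * (M : ℝ)) * Y⁻¹ = 1 / (12 * (M : ℝ) * Y) := by
        rw [one_div, one_div, ← mul_inv]
      rw [e1, e2, div_lt_div_iff₀ hXpos (by positivity)]
      nlinarith [hkey, mul_pos (mul_pos (by linarith : (0:ℝ) < 12 * (M : ℝ)) hs0) hYpos,
        hYpos, hXpos, hC₀]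
    have hrw : ((f (j : ℕ) : ℕ) : ℝ) ^ (-r) = Y⁻¹ := by
      rw [hY_def, ← Real.rpow_neg (hfpos _).le]
    rw [hrw]
    calc (s : ℝ) * ∑' q : {q : ℕ // q.Prime ∧ T < (q : ℝ) ∧ q ≤ f (i : ℕ)},
          ((q : ℕ) : ℝ) ^ (-r)
        ≤ (s : ℝ) * (X⁻¹ * C₀) := by
          apply mul_le_mul_of_nonneg_left _ hs0.le
          exact htail
      _ < 1 / (12 * (M : ℝ)) * Y⁻¹ := hgoal
  -- (4)
  · intro i
    set Z : ℝ := ((f (i : ℕ) : ℕ) : ℝ) with hZ_def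
    have hZ2 : (2 : ℝ) ≤ Z := hfR _
    have hZpos : (0 : ℝ) < Z := by linarith
    have htail := aux_tail a₁ b₁ ((s : ℝ) * r) ha₁ (by linarith) hab₁ Z (by linarith)
      (fun q => f (i : ℕ) < q) (fun q _ hq => by rw [hZ_def]; exact_mod_cast (hq : f (i : ℕ) < q))
    set W : ℝ := Z ^ (b₁ - r) with hW_def
    have hWpos : 0 < W := Real.rpow_pos_of_pos hZpos _
    have hW : 12 * (C₁ + 1) < W := h4q _
    have hZb : Z ^ (-b₁) = W⁻¹ * Z ^ (-r) := by
      rw [hW_def, ← Real.rpow_neg hZpos.le, ← Real.rpow_add hZpos]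
      congr 1; ring
    have hfin : W⁻¹ * Z ^ (-r) * C₁ < 1 / 12 * Z ^ (-r) := by
      have hzr : (0 : ℝ) < Z ^ (-r) := Real.rpow_pos_of_pos hZpos _
      have h6 : W⁻¹ * C₁ < 1 / 12 := by
        rw [inv_mul_lt_iff₀ hWpos]
        nlinarith
      calc W⁻¹ * Z ^ (-r) * C₁ = (W⁻¹ * C₁) * Z ^ (-r) := by ring
        _ < 1 / 12 * Z ^ (-r) := mul_lt_mul_of_pos_right h6 hzr
    calc ∑' q : {q : ℕ // q.Prime ∧ f (i : ℕ) < q}, ((q : ℕ) : ℝ) ^ (-((s : ℝ) * r))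
        ≤ Z ^ (-b₁) * C₁ := htail
      _ = W⁻¹ * Z ^ (-r) * C₁ := by rw [hZb]
      _ < 1 / 12 * Z ^ (-r) := hfin
end

section
/- Let s ≥ 2 be an integer, and let S and T be disjoint finite sets of rational primes such that every prime in S is greater than s. Then there exists a number field K with [K:ℚ] = s such that every prime p ∈ S splits completely in 𝓞_K (i.e., p𝓞_K is a product of s distinct prime ideals, each with ramification index 1 and residue degree 1) and every prime p ∈ T is inert in 𝓞_K (i.e., p𝓞_K is a prime ideal of 𝓞_K). -/
/-!
Choose a monic `f ∈ ℤ[X]` of degree `s` which, modulo each `p ∈ S`, is a product of `s` distinct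
linear factors (possible since `p > s`), and which is irreducible modulo each `p ∈ T` and modulo
one further auxiliary prime; the last condition makes `f` irreducible. Such an `f` exists by the
Chinese remainder theorem applied coefficientwise. Let `K = ℚ(θ)` with `f(θ) = 0`. For every
`p ∈ S ∪ T` the reduction of `f` is separable, so `f'(θ)`, which lies in the conductor of `ℤ[θ]`,
is a unit modulo `p`; hence `p` does not divide the index of `ℤ[θ]` and the Kummer–Dedekind
theorem reads off the splitting of `p` from the factorisation of `f` modulo `p`.
-/

open NumberField Polynomial

open Function in
theorem exists_intCast_eq_of_forall_prime {M : Finset ℕ} (hM : ∀ p ∈ M, p.Prime)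
    (v : (p : ℕ) → ZMod p) : ∃ c : ℤ, ∀ p ∈ M, (c : ZMod p) = v p := by
  have hcop : Pairwise (Nat.Coprime on fun p : M ↦ (p : ℕ)) := fun p q hpq ↦
    (Nat.coprime_primes (hM p p.2) (hM q q.2)).mpr (Subtype.coe_ne_coe.mpr hpq)
  obtain ⟨x, hx⟩ := (ZMod.prodEquivPi _ hcop).surjective fun p ↦ v p
  obtain ⟨c, rfl⟩ := ZMod.intCast_surjective x
  refine ⟨c, fun p hp ↦ ?_⟩
  have := congrFun hx ⟨p, hp⟩
  rwa [ZMod.prodEquivPi_apply, map_intCast] at this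

theorem exists_monic_map_eq_of_forall_prime {M : Finset ℕ} (hM : ∀ p ∈ M, p.Prime) {n : ℕ}
    (g : (p : ℕ) → (ZMod p)[X]) (hg : ∀ p ∈ M, (g p).Monic ∧ (g p).natDegree = n) :
    ∃ f : ℤ[X], f.Monic ∧ f.natDegree = n ∧ ∀ p ∈ M, f.map (Int.castRingHom (ZMod p)) = g p := by
  choose c hc using fun j ↦ exists_intCast_eq_of_forall_prime hM fun p ↦ (g p).coeff j
  have hlow : (∑ j : Fin n, C (c j) * X ^ (j : ℕ)).degree < (n : WithBot ℕ) :=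
    degree_sum_fin_lt _
  refine ⟨X ^ n + ∑ j : Fin n, C (c j) * X ^ (j : ℕ), monic_X_pow_add hlow, ?_, fun p hp ↦ ?_⟩
  · rw [natDegree_add_eq_left_of_degree_lt (by rwa [degree_X_pow]), natDegree_X_pow]
  · obtain ⟨hmonic, hdeg⟩ := hg p hp
    rw [hmonic.as_sum, hdeg, ← Fin.sum_univ_eq_sum_range]
    simp only [Polynomial.map_add, Polynomial.map_pow, map_X, Polynomial.map_sum,
      Polynomial.map_mul, map_C, Int.coe_castRingHom, hc _ p hp]

theorem ZMod.exists_monic_irreducible_natDegree_eq (p : ℕ) [Fact p.Prime] {n : ℕ} (hn : n ≠ 0) :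
    ∃ g : (ZMod p)[X], g.Monic ∧ Irreducible g ∧ g.natDegree = n := by
  obtain ⟨α, hα⟩ := Field.exists_primitive_element_of_finite_bot (ZMod p) (GaloisField p n)
  have hint : IsIntegral (ZMod p) α := Algebra.IsIntegral.isIntegral α
  refine ⟨minpoly (ZMod p) α, minpoly.monic hint, minpoly.irreducible hint, ?_⟩
  rw [← IntermediateField.adjoin.finrank hint, hα, IntermediateField.finrank_top',
    GaloisField.finrank p hn]

theorem exists_monic_map_eq_prod_X_sub_C_and_irreducible_map {n : ℕ} (hn : n ≠ 0)
    {S T : Finset ℕ} (hST : Disjoint S T) (hSprime : ∀ p ∈ S, p.Prime)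
    (hTprime : ∀ p ∈ T, p.Prime) (hSgt : ∀ p ∈ S, n < p) :
    ∃ f : ℤ[X], f.Monic ∧ f.natDegree = n ∧
      (∀ p ∈ S, ∃ A : Finset (ZMod p), A.card = n ∧
        f.map (Int.castRingHom (ZMod p)) = ∏ a ∈ A, (X - C a)) ∧
      ∀ p ∈ T, Irreducible (f.map (Int.castRingHom (ZMod p))) := by
  have hlocal (p : ℕ) : ∃ g : (ZMod p)[X], p ∈ S ∪ T → g.Monic ∧ g.natDegree = n ∧
      (p ∈ S → ∃ A : Finset (ZMod p), A.card = n ∧ g = ∏ a ∈ A, (X - C a)) ∧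
      (p ∈ T → Irreducible g) := by
    by_cases hS : p ∈ S
    · have : Fact p.Prime := ⟨hSprime p hS⟩
      obtain ⟨A, -, hA⟩ := (Finset.univ : Finset (ZMod p)).exists_subset_card_eq (n := n)
        (by rw [Finset.card_univ, ZMod.card]; exact (hSgt p hS).le)
      refine ⟨∏ a ∈ A, (X - C a), fun _ ↦ ⟨?_, ?_, fun _ ↦ ⟨A, hA, rfl⟩, fun hT ↦ ?_⟩⟩
      · exact monic_prod_of_monic _ _ fun a _ ↦ monic_X_sub_C a
      · rw [natDegree_finsetProd_X_sub_C_eq_card, hA]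
      · exact absurd hT (Finset.disjoint_left.mp hST hS)
    by_cases hT : p ∈ T
    · have : Fact p.Prime := ⟨hTprime p hT⟩
      obtain ⟨g, hmonic, hirr, hdeg⟩ := ZMod.exists_monic_irreducible_natDegree_eq p hn
      exact ⟨g, fun _ ↦ ⟨hmonic, hdeg, fun h ↦ absurd h hS, fun _ ↦ hirr⟩⟩
    · exact ⟨0, fun h ↦ by simp_all⟩
  choose g hg using hlocal
  have hprime (p : ℕ) (hp : p ∈ S ∪ T) : p.Prime :=
    (Finset.mem_union.mp hp).elim (hSprime p) (hTprime p)
  obtain ⟨f, hmonic, hdeg, hmap⟩ := exists_monic_map_eq_of_forall_prime hprime g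
    fun p hp ↦ ⟨(hg p hp).1, (hg p hp).2.1⟩
  refine ⟨f, hmonic, hdeg, fun p hp ↦ ?_, fun p hp ↦ ?_⟩
  · rw [hmap p (Finset.mem_union_left T hp)]
    exact (hg p (Finset.mem_union_left T hp)).2.2.1 hp
  · rw [hmap p (Finset.mem_union_right S hp)]
    exact (hg p (Finset.mem_union_right S hp)).2.2.2 hp

open UniqueFactorizationMonoid in
theorem Polynomial.card_normalizedFactors_toFinset_prod_X_sub_C {F : Type*} [Field F]
    [DecidableEq F] (A : Finset F) :
    (normalizedFactors (∏ a ∈ A, (X - C a))).toFinset.card = A.card := by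
  have hnormalize (q) (hq : q ∈ A.val.map fun a ↦ X - C a) : normalize q = q := by
    obtain ⟨a, -, rfl⟩ := Multiset.mem_map.mp hq
    exact (monic_X_sub_C a).normalize_eq_self
  rw [Finset.prod_eq_multiset_prod, normalizedFactors_prod_eq _ fun q hq ↦ ?_,
    Multiset.map_congr rfl hnormalize, Multiset.map_id']
  · exact Finset.card_image_of_injective A (sub_right_injective.comp C_injective)
  · obtain ⟨a, -, rfl⟩ := Multiset.mem_map.mp hq
    exact irreducible_X_sub_C a

theorem exists_numberField_minpoly_eq {f : ℤ[X]} (hf : f.Monic) (hirr : Irreducible f) :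
    ∃ (K : Type) (_ : Field K) (_ : NumberField K) (θ : 𝓞 K),
      Module.finrank ℚ K = f.natDegree ∧ minpoly ℤ θ = f ∧
        Algebra.adjoin ℚ {algebraMap (𝓞 K) K θ} = ⊤ := by
  set fℚ := f.map (algebraMap ℤ ℚ)
  have hfℚ : fℚ.Monic := hf.map _
  have : Fact (Irreducible fℚ) := ⟨hf.irreducible_iff_irreducible_map_fraction_map.mp hirr⟩
  have hrootℚ : aeval (AdjoinRoot.root fℚ) fℚ = 0 :=
    (AdjoinRoot.aeval_eq fℚ).trans AdjoinRoot.mk_self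
  have hroot : aeval (AdjoinRoot.root fℚ) f = 0 := by rwa [← aeval_map_algebraMap ℚ]
  let θ : 𝓞 (AdjoinRoot fℚ) := ⟨AdjoinRoot.root fℚ, ⟨f, hf, hroot⟩⟩
  refine ⟨AdjoinRoot fℚ, inferInstance, inferInstance, θ, ?_, ?_, AdjoinRoot.adjoinRoot_eq_top⟩
  · rw [(AdjoinRoot.powerBasis hfℚ.ne_zero).finrank, AdjoinRoot.powerBasis_dim,
      hf.natDegree_map]
  · rw [← minpoly.algebraMap_eq (FaithfulSMul.algebraMap_injective (𝓞 _) (AdjoinRoot fℚ))]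
    refine map_injective _ (algebraMap ℤ ℚ).injective_int ?_
    change Polynomial.map _ (minpoly ℤ (AdjoinRoot.root fℚ)) = fℚ
    rw [← minpoly.isIntegrallyClosed_eq_field_fractions' ℚ ⟨f, hf, hroot⟩]
    exact (minpoly.eq_of_irreducible_of_monic Fact.out hrootℚ hfℚ).symm

open Ideal

theorem span_aeval_derivative_sup_span_eq_top_of_separable {B : Type*} [CommRing B] {x : B}
    {f : ℤ[X]} (hf : aeval x f = 0) {p : ℕ}
    (hsep : (f.map (Int.castRingHom (ZMod p))).Separable) :
    span {aeval x (derivative f)} ⊔ span {(p : B)} = ⊤ := by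
  obtain ⟨u, v, huv⟩ := hsep
  have hsurj := map_surjective _ (ZMod.ringHom_surjective (Int.castRingHom (ZMod p)))
  obtain ⟨U, rfl⟩ := hsurj u
  obtain ⟨V, rfl⟩ := hsurj v
  have hker :
      U * f + V * derivative f - 1 ∈ RingHom.ker (mapRingHom (Int.castRingHom (ZMod p))) := by
    simp [← derivative_map, huv]
  rw [ker_mapRingHom, ZMod.ker_intCastRingHom, map_span, Set.image_singleton,
    mem_span_singleton] at hker
  obtain ⟨E, hE⟩ := hker
  have hbezout : (1 : B) = aeval x V * aeval x (derivative f) - p * aeval x E := by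
    have := congrArg (aeval x) hE
    simp only [map_sub, map_add, map_mul, map_one, map_natCast, hf, mul_zero, zero_add] at this
    linear_combination -this
  rw [eq_top_iff_one, hbezout]
  exact sub_mem (mem_sup_left (mul_mem_left _ _ (mem_span_singleton_self _)))
    (mem_sup_right (mul_mem_right _ _ (mem_span_singleton_self _)))

theorem exists_finset_prod_eq_span_of_ncard_primesOver_eq_finrank {K : Type*} [Field K]
    [NumberField K] {p : ℕ} [hp : Fact p.Prime]
    (hcard : (primesOver (span {(p : ℤ)}) (𝓞 K)).ncard = Module.finrank ℚ K) :
    ∃ F : Finset (Ideal (𝓞 K)), F.card = Module.finrank ℚ K ∧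
      (∀ P ∈ F, P.IsPrime ∧ absNorm P = p) ∧ span {(p : 𝓞 K)} = ∏ P ∈ F, P := by
  have : (span {(p : ℤ)}).IsMaximal := Int.ideal_span_isMaximal_of_prime p
  let _ : Fintype (primesOver (span {(p : ℤ)}) (𝓞 K)) := Fintype.ofFinite _
  have hpos (P : primesOver (span {(p : ℤ)}) (𝓞 K)) (_ : P ∈ Finset.univ) :
      1 ≤ P.1.ramificationIdx ℤ * P.1.inertiaDeg ℤ :=
    have := P.2.1
    Nat.mul_pos (ramificationIdx_pos P.1 ℤ) (inertiaDeg_pos P.1 ℤ)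
  have hsum := sum_ramification_inertia_eq_finrank (span {(p : ℤ)}) (𝓞 K)
  rw [RingOfIntegers.rank, ← hcard, ← Nat.card_coe_set_eq, Nat.card_eq_fintype_card,
    ← Finset.card_univ, Finset.card_eq_sum_ones, eq_comm, Finset.sum_eq_sum_iff_of_le hpos] at hsum
  have hunramified (P : Ideal (𝓞 K)) (hP : P ∈ primesOver (span {(p : ℤ)}) (𝓞 K)) :
      P.ramificationIdx ℤ = 1 ∧ P.inertiaDeg ℤ = 1 :=
    mul_eq_one.mp (hsum ⟨P, hP⟩ (Finset.mem_univ _)).symm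
  refine ⟨(primesOver (span {(p : ℤ)}) (𝓞 K)).toFinset, ?_, fun P hP ↦ ?_, ?_⟩
  · rw [← hcard, Set.ncard_eq_toFinset_card']
  · rw [Set.mem_toFinset] at hP
    have ⟨_, _⟩ := hP
    rw [← pow_inertiaDeg p P, (hunramified P hP).2, pow_one]
    exact ⟨hP.1, rfl⟩
  · calc span {(p : 𝓞 K)} = map (algebraMap ℤ (𝓞 K)) (span {(p : ℤ)}) := by simp [map_span]
      _ = _ := map_algebraMap_eq_finsetProd_pow (by simp [hp.out.ne_zero])
      _ = _ := Finset.prod_congr rfl fun P hP ↦ by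
        rw [(hunramified P (Set.mem_toFinset.mp hP)).1, pow_one]

namespace RingOfIntegers

variable {K : Type*} [Field K] [NumberField K] {θ : 𝓞 K}

theorem aeval_derivative_minpoly_mem_conductor
    (hθ : Algebra.adjoin ℚ {algebraMap (𝓞 K) K θ} = ⊤) :
    aeval θ (derivative (minpoly ℤ θ)) ∈ conductor ℤ θ := by
  rw [← Ideal.span_singleton_le_iff_mem, ← conductor_mul_differentIdeal ℤ ℚ K θ hθ]
  exact Ideal.mul_le_left

theorem aeval_derivative_minpoly_ne_zero : aeval θ (derivative (minpoly ℤ θ)) ≠ 0 := by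
  have hsep := Algebra.IsSeparable.isSeparable ℚ (algebraMap (𝓞 K) K θ)
  have := hsep.aeval_derivative_ne_zero (minpoly.aeval ℚ (algebraMap (𝓞 K) K θ))
  rwa [minpoly.isIntegrallyClosed_eq_field_fractions ℚ K θ.isIntegral, derivative_map,
    aeval_map_algebraMap, aeval_algebraMap_apply,
    map_ne_zero_iff _ (FaithfulSMul.algebraMap_injective _ _)] at this

theorem not_dvd_exponent_of_sup_eq_top (hC : conductor ℤ θ ≠ ⊥) {p : ℕ} (hp : 1 < p)
    (hsup : conductor ℤ θ ⊔ span {(p : 𝓞 K)} = ⊤) : ¬ p ∣ exponent θ := by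
  set A := {d : ℕ | 0 < d ∧ (d : 𝓞 K) ∈ conductor ℤ θ}
  have hA : A.Nonempty := ⟨_, Nat.pos_of_ne_zero (absNorm_eq_zero_iff.not.mpr hC), absNorm_mem _⟩
  obtain ⟨hd0, hdC⟩ : exponent θ ∈ A := exponent_eq_sInf (θ := θ) ▸ Nat.sInf_mem hA
  rintro ⟨m, hm⟩
  -- writing `1 = c + p * b` with `c` in the conductor, `m = m * c + b * exponent θ` lies in the
  -- conductor although `m < exponent θ`
  obtain ⟨c, hc, _, hb, hcb⟩ := Submodule.mem_sup.mp (hsup ▸ Submodule.mem_top (x := (1 : 𝓞 K)))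
  obtain ⟨b, rfl⟩ := mem_span_singleton'.mp hb
  have hmA : m ∈ A := by
    refine ⟨Nat.pos_of_mul_pos_left (hm ▸ hd0), ?_⟩
    have : (m : 𝓞 K) = m * c + b * exponent θ := by
      rw [hm]; push_cast; linear_combination (m : 𝓞 K) * hcb.symm
    rw [this]
    exact add_mem (mul_mem_left _ _ hc) (mul_mem_left _ _ hdC)
  have := exponent_eq_sInf (θ := θ) ▸ Nat.sInf_le hmA
  nlinarith

theorem not_dvd_exponent_of_separable (hθ : Algebra.adjoin ℚ {algebraMap (𝓞 K) K θ} = ⊤)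
    {p : ℕ} (hp : 1 < p) (hsep : ((minpoly ℤ θ).map (Int.castRingHom (ZMod p))).Separable) :
    ¬ p ∣ exponent θ := by
  have hmem := aeval_derivative_minpoly_mem_conductor hθ
  refine not_dvd_exponent_of_sup_eq_top
    ((Submodule.ne_bot_iff _).mpr ⟨_, hmem, aeval_derivative_minpoly_ne_zero⟩) hp ?_
  refine top_le_iff.mp ?_
  rw [← span_aeval_derivative_sup_span_eq_top_of_separable (minpoly.aeval ℤ θ) hsep]
  exact sup_le_sup_right ((span_singleton_le_iff_mem _).mpr hmem) _

variable {p : ℕ} [Fact p.Prime]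

theorem isPrime_span_of_irreducible (hp : ¬ p ∣ exponent θ)
    (hirr : Irreducible ((minpoly ℤ θ).map (Int.castRingHom (ZMod p)))) :
    (span {(p : 𝓞 K)}).IsPrime := by
  have := PrincipalIdealRing.isMaximal_of_irreducible hirr
  let := Ideal.Quotient.field (span {(minpoly ℤ θ).map (Int.castRingHom (ZMod p))})
  have := (ZModXQuotSpanEquivQuotSpan hp).symm.toMulEquiv.isDomain
  exact (Quotient.isDomain_iff_prime _).mp this

theorem ncard_primesOver_eq_card_monicFactorsMod (hp : ¬ p ∣ exponent θ) :
    (primesOver (span {(p : ℤ)}) (𝓞 K)).ncard = (monicFactorsMod θ p).card := by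
  rw [← Nat.card_coe_set_eq,
    Nat.card_congr (NumberField.Ideal.primesOverSpanEquivMonicFactorsMod hp),
    Nat.card_eq_finsetCard]

end RingOfIntegers

open RingOfIntegers

/-- Given an integer `s ≥ 2` and disjoint finite sets `S`, `T` of rational primes with every
prime of `S` greater than `s`, there is a degree-`s` number field `K` in which every prime of
`S` splits completely (its extension is the product of `s` distinct prime ideals, each of
absolute norm `p`, i.e. with ramification index and residue degree `1`) and every prime of
`T` is inert (its extension is a prime ideal). -/
theorem stmt19 (s : ℕ) (hs : 2 ≤ s) (S T : Finset ℕ)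
    (hST : Disjoint S T)
    (hSprime : ∀ p ∈ S, p.Prime) (hTprime : ∀ p ∈ T, p.Prime)
    (hSgt : ∀ p ∈ S, s < p) :
    ∃ (K : Type) (_ : Field K) (_ : NumberField K),
      Module.finrank ℚ K = s ∧
      (∀ p ∈ S, ∃ F : Finset (Ideal (𝓞 K)),
        F.card = s ∧ (∀ P ∈ F, P.IsPrime ∧ Ideal.absNorm P = p) ∧
        Ideal.span {(p : 𝓞 K)} = ∏ P ∈ F, P) ∧
      (∀ p ∈ T, (Ideal.span {(p : 𝓞 K)}).IsPrime) := by
  obtain ⟨q, hq, hqST⟩ := Nat.infinite_setOfPred_prime.exists_notMem_finset (S ∪ T)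
  have : Fact q.Prime := ⟨hq⟩
  obtain ⟨f, hmonic, hdeg, hsplit, hinert⟩ :=
    exists_monic_map_eq_prod_X_sub_C_and_irreducible_map (T := insert q T) (by omega)
      (Finset.disjoint_insert_right.mpr ⟨fun h ↦ hqST (Finset.mem_union_left T h), hST⟩)
      hSprime (Finset.forall_mem_insert _ _ _ |>.mpr ⟨hq, hTprime⟩) hSgt
  have hirr := hmonic.irreducible_of_irreducible_map _ _ (hinert q (Finset.mem_insert_self q T))
  obtain ⟨K, _, _, θ, hrank, hmin, hθ⟩ := exists_numberField_minpoly_eq hmonic hirr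
  rw [hdeg] at hrank
  refine ⟨K, inferInstance, inferInstance, hrank, fun p hp ↦ ?_, fun p hp ↦ ?_⟩
  · have : Fact p.Prime := ⟨hSprime p hp⟩
    obtain ⟨A, hA, hfA⟩ := hsplit p hp
    have hexp := not_dvd_exponent_of_separable hθ (hSprime p hp).one_lt
      (by rw [hmin, hfA]; exact separable_prod_X_sub_C_iff'.mpr fun _ _ _ _ ↦ id)
    rw [← hrank]
    refine exists_finset_prod_eq_span_of_ncard_primesOver_eq_finrank ?_
    rw [ncard_primesOver_eq_card_monicFactorsMod hexp, monicFactorsMod, hmin, hfA,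
      card_normalizedFactors_toFinset_prod_X_sub_C, hA, hrank]
  · have : Fact p.Prime := ⟨hTprime p hp⟩
    have hirrp := hinert p (Finset.mem_insert_of_mem hp)
    rw [← hmin] at hirrp
    exact isPrime_span_of_irreducible (not_dvd_exponent_of_separable hθ (hTprime p hp).one_lt
      (PerfectField.separable_of_irreducible hirrp)) hirrp
end
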